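/- arXiv:2510.03671 — 3 statements merged into one kernel-verified Lean document; each statement's English description precedes it below -/
import Mathlib

section
/- For a partition λ and n > |λ| + λ₁, the number of standard Young tableaux of shape λ[n] is given by f^{λ[n]} = (f^λ/|λ|!) · n(n−1)⋯(n−|λ|−λ₁+1) / ∏_{i=1}^{λ₁}(n−|λ|−i+1+λᵗᵢ), where λᵗ is the transpose (conjugate) partition of λ. -/
structure SYT (μ : YoungDiagram) where
  entry : ℕ → ℕ → ℕ
  row_strict : ∀ i j1 j2, j1 < j2 → (i, j2) ∈ μ → entry i j1 < entry i j2
  col_strict : ∀ i1 i2 j, i1 < i2 → (i2, j) ∈ μ → entry i1 j < entry i2 j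
  zeros : ∀ i j, (i, j) ∉ μ → entry i j = 0
  mem_range : ∀ i j, (i, j) ∈ μ → 1 ≤ entry i j ∧ entry i j ≤ μ.card
  bij : ∀ m, 1 ≤ m → m ≤ μ.card → ∃! c : ℕ × ℕ, c ∈ μ ∧ entry c.1 c.2 = m

namespace SYT

theorem ext' {μ : YoungDiagram} {T U : SYT μ} (h : T.entry = U.entry) : T = U := by
  cases T; cases U; simpa using h

instance finite (μ : YoungDiagram) : Finite (SYT μ) := by
  have : Function.Injective
      (fun (T : SYT μ) => (fun c : μ.cells => (T.entry c.1.1 c.1.2 : ℕ))) := by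
    intro T U h
    apply ext'
    funext i j
    by_cases hm : (i, j) ∈ μ
    · exact congrFun h ⟨(i, j), (YoungDiagram.mem_cells _).2 hm⟩
    · rw [T.zeros i j hm, U.zeros i j hm]
  have : Function.Injective
      (fun (T : SYT μ) => (fun c : μ.cells => (⟨T.entry c.1.1 c.1.2,
        Nat.lt_succ_of_le (T.mem_range c.1.1 c.1.2 ((YoungDiagram.mem_cells _).1 c.2)).2⟩ :
          Fin (μ.card + 1)))) := by
    intro T U h
    apply ext'
    funext i j
    by_cases hm : (i, j) ∈ μ
    · have := congrFun h ⟨(i, j), (YoungDiagram.mem_cells _).2 hm⟩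
      exact congrArg Fin.val this
    · rw [T.zeros i j hm, U.zeros i j hm]
  exact Finite.of_injective _ this

noncomputable instance (μ : YoungDiagram) : Fintype (SYT μ) := Fintype.ofFinite _

theorem card_of_card_eq_zero {μ : YoungDiagram} (h : μ.card = 0) :
    Nat.card (SYT μ) = 1 := by
  have hempty : ∀ c : ℕ × ℕ, c ∉ μ := by
    intro c hc
    have : c ∈ μ.cells := (YoungDiagram.mem_cells _).2 hc
    simp [Finset.card_eq_zero.1 h] at this
  have : Nonempty (SYT μ) := ⟨{
    entry := fun _ _ => 0
    row_strict := fun i j1 j2 _ hm => absurd hm (hempty _)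
    col_strict := fun i1 i2 j _ hm => absurd hm (hempty _)
    zeros := fun _ _ _ => rfl
    mem_range := fun i j hm => absurd hm (hempty _)
    bij := fun m h1 h2 => absurd (h1.trans (h2.trans_eq h)) (by omega) }⟩
  have : Subsingleton (SYT μ) := ⟨by
    intro T U
    apply ext'
    funext i j
    rw [T.zeros i j (hempty _), U.zeros i j (hempty _)]⟩
  rw [Nat.card_eq_one_iff_unique]
  exact ⟨‹_›, ‹_›⟩

end SYT

namespace YoungDiagram

/-- helper: identify rowLen from a membership criterion -/
theorem rowLen_eq_of_iff {ν : YoungDiagram} {i L : ℕ} (h : ∀ j, (i, j) ∈ ν ↔ j < L) :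
    ν.rowLen i = L := by
  rcases lt_trichotomy (ν.rowLen i) L with hlt | he | hgt
  · exact absurd (mem_iff_lt_rowLen.1 ((h _).2 hlt)) (lt_irrefl _)
  · exact he
  · exact absurd ((h _).1 (mem_iff_lt_rowLen.2 hgt)) (lt_irrefl _)

def cornerRows (μ : YoungDiagram) : Finset ℕ :=
  (Finset.range (μ.colLen 0)).filter fun i => μ.rowLen (i + 1) < μ.rowLen i

theorem mem_cornerRows {μ : YoungDiagram} {i : ℕ} :
    i ∈ μ.cornerRows ↔ μ.rowLen (i + 1) < μ.rowLen i := by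
  constructor
  · intro h; exact (Finset.mem_filter.1 h).2
  · intro h
    refine Finset.mem_filter.2 ⟨Finset.mem_range.2 ?_, h⟩
    rw [← mem_iff_lt_colLen, mem_iff_lt_rowLen]
    omega

def eraseRow (μ : YoungDiagram) (i : ℕ) : YoungDiagram :=
  if h : μ.rowLen (i + 1) < μ.rowLen i then
    { cells := μ.cells.erase (i, μ.rowLen i - 1)
      isLowerSet := by
        intro a b hba ha
        rw [Finset.coe_erase] at ha ⊢
        obtain ⟨ha, hane⟩ := ha
        have haμ : a ∈ μ := (mem_cells _).1 (by simpa using ha)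
        have hbμ : b ∈ μ := μ.isLowerSet hba haμ
        refine ⟨by simpa using (mem_cells _).2 hbμ, ?_⟩
        intro hbc
        simp only [Set.mem_singleton_iff] at hbc hane
        subst hbc
        obtain ⟨h1, h2⟩ := Prod.le_def.1 hba
        have hane' : i < a.1 ∨ μ.rowLen i - 1 < a.2 := by
          rcases Nat.lt_or_ge i a.1 with h' | h'
          · exact Or.inl h'
          · rcases Nat.lt_or_ge (μ.rowLen i - 1) a.2 with h'' | h''
            · exact Or.inr h''
            · exact absurd (Prod.ext (le_antisymm h1 h') (le_antisymm h2 h'')).symm hane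
        rcases hane' with h' | h'
        · have : (i + 1, μ.rowLen i - 1) ∈ μ :=
            μ.up_left_mem h' h2 (show (a.1, a.2) ∈ μ by simpa using haμ)
          have := mem_iff_lt_rowLen.1 this
          omega
        · have : (i, μ.rowLen i - 1 + 1) ∈ μ :=
            μ.up_left_mem h1 h' (show (a.1, a.2) ∈ μ by simpa using haμ)
          have := mem_iff_lt_rowLen.1 this
          omega }
  else μ

theorem mem_eraseRow {μ : YoungDiagram} {i : ℕ} (h : μ.rowLen (i + 1) < μ.rowLen i)
    {x : ℕ × ℕ} : x ∈ μ.eraseRow i ↔ x ∈ μ ∧ x ≠ (i, μ.rowLen i - 1) := by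
  rw [eraseRow, dif_pos h]
  change x ∈ Finset.erase _ _ ↔ _
  rw [Finset.mem_erase, and_comm, mem_cells]

theorem corner_mem {μ : YoungDiagram} {i : ℕ} (h : μ.rowLen (i + 1) < μ.rowLen i) :
    (i, μ.rowLen i - 1) ∈ μ := mem_iff_lt_rowLen.2 (by omega)

theorem card_eraseRow {μ : YoungDiagram} {i : ℕ} (h : μ.rowLen (i + 1) < μ.rowLen i) :
    (μ.eraseRow i).card = μ.card - 1 := by
  have : (μ.eraseRow i).cells = μ.cells.erase (i, μ.rowLen i - 1) := by
    rw [eraseRow, dif_pos h]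
  rw [YoungDiagram.card, this,
    Finset.card_erase_of_mem ((mem_cells _).2 (corner_mem h))]

theorem rowLen_eraseRow {μ : YoungDiagram} {i : ℕ} (h : μ.rowLen (i + 1) < μ.rowLen i)
    (i' : ℕ) : (μ.eraseRow i).rowLen i' =
      if i' = i then μ.rowLen i - 1 else μ.rowLen i' := by
  apply rowLen_eq_of_iff
  intro j
  rw [mem_eraseRow h]
  by_cases hi : i' = i
  · subst hi
    rw [if_pos rfl]
    simp only [mem_iff_lt_rowLen, ne_eq, Prod.mk.injEq, eq_self_iff_true, true_and]
    omega
  · simp only [if_neg hi, mem_iff_lt_rowLen, ne_eq, Prod.mk.injEq]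
    constructor
    · exact fun hh => hh.1
    · intro hh; exact ⟨hh, fun hc => hi hc.1⟩

theorem colLen_zero_eraseRow_le {μ : YoungDiagram} (i : ℕ) :
    (μ.eraseRow i).colLen 0 ≤ μ.colLen 0 := by
  by_cases h : μ.rowLen (i + 1) < μ.rowLen i
  · by_contra hc
    push_neg at hc
    have : (μ.colLen 0, 0) ∈ μ.eraseRow i := mem_iff_lt_colLen.2 hc
    have := ((mem_eraseRow h).1 this).1
    exact absurd (mem_iff_lt_colLen.1 this) (lt_irrefl _)
  · rw [eraseRow, dif_neg h]

theorem card_eq_sum_rowLen (μ : YoungDiagram) {k : ℕ} (hk : μ.colLen 0 ≤ k) :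
    μ.card = ∑ i ∈ Finset.range k, μ.rowLen i := by
  have : μ.cells = (Finset.range k).biUnion (fun i => μ.row i) := by
    ext ⟨a, b⟩
    simp only [Finset.mem_biUnion, Finset.mem_range, mem_row_iff]
    constructor
    · intro hab
      have hm : (a, b) ∈ μ := (mem_cells _).1 hab
      have : a < μ.colLen 0 := mem_iff_lt_colLen.1 (μ.up_left_mem le_rfl (Nat.zero_le _) hm)
      exact ⟨a, lt_of_lt_of_le this hk, (mem_cells _).2 hm, rfl⟩
    · rintro ⟨i, _, hm, rfl⟩
      exact (mem_cells _).2 ((mem_cells _).1 hm)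
  rw [YoungDiagram.card, this, Finset.card_biUnion]
  · exact Finset.sum_congr rfl fun i _ => (μ.rowLen_eq_card).symm
  · intro x _ y _ hxy
    simp only [Finset.disjoint_left, mem_row_iff]
    rintro c ⟨_, rfl⟩ ⟨_, h2⟩
    exact hxy h2

end YoungDiagram

theorem pair_eq {a b i j : ℕ} (h : (a, b) = (i, j)) : a = i ∧ b = j := Prod.ext_iff.1 h

namespace SYT

open YoungDiagram

variable {μ : YoungDiagram}

theorem max_cell_corner (T : SYT μ) {c : ℕ × ℕ}
    (hc : c ∈ μ) (he : T.entry c.1 c.2 = μ.card) :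
    μ.rowLen (c.1 + 1) < μ.rowLen c.1 ∧ c.2 = μ.rowLen c.1 - 1 := by
  have h1 : (c.1, c.2 + 1) ∉ μ := by
    intro hmem
    have h1 := T.row_strict c.1 c.2 (c.2 + 1) (by omega) hmem
    have h2 := (T.mem_range _ _ hmem).2
    omega
  have h2 : (c.1 + 1, c.2) ∉ μ := by
    intro hmem
    have h1 := T.col_strict c.1 (c.1 + 1) c.2 (by omega) hmem
    have h2 := (T.mem_range _ _ hmem).2
    omega
  have hlt : c.2 < μ.rowLen c.1 :=
    mem_iff_lt_rowLen.1 (show (c.1, c.2) ∈ μ by simpa using hc)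
  have hge : μ.rowLen c.1 ≤ c.2 + 1 := by
    by_contra hcon; push_neg at hcon
    exact h1 (mem_iff_lt_rowLen.2 hcon)
  have h3 : μ.rowLen (c.1 + 1) ≤ c.2 := by
    by_contra hcon; push_neg at hcon
    exact h2 (mem_iff_lt_rowLen.2 hcon)
  exact ⟨by omega, by omega⟩

theorem card_pos_of_corner {i : ℕ} (h : μ.rowLen (i + 1) < μ.rowLen i) : 0 < μ.card :=
  Finset.card_pos.2 ⟨_, (mem_cells _).2 (corner_mem h)⟩

noncomputable def maxCell (T : SYT μ) (hpos : 0 < μ.card) : ℕ × ℕ :=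
  (T.bij μ.card hpos le_rfl).choose

theorem maxCell_spec (T : SYT μ) (hpos : 0 < μ.card) :
    maxCell T hpos ∈ μ ∧ T.entry (maxCell T hpos).1 (maxCell T hpos).2 = μ.card :=
  (T.bij μ.card hpos le_rfl).choose_spec.1

theorem maxCell_unique (T : SYT μ) (hpos : 0 < μ.card) {d : ℕ × ℕ}
    (hd : d ∈ μ ∧ T.entry d.1 d.2 = μ.card) : d = maxCell T hpos :=
  (T.bij μ.card hpos le_rfl).choose_spec.2 d hd

theorem maxCell_corner (T : SYT μ) (hpos : 0 < μ.card) :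
    μ.rowLen ((maxCell T hpos).1 + 1) < μ.rowLen (maxCell T hpos).1 ∧
      (maxCell T hpos).2 = μ.rowLen (maxCell T hpos).1 - 1 :=
  max_cell_corner T (maxCell_spec T hpos).1 (maxCell_spec T hpos).2

def shrink {i : ℕ} (h : μ.rowLen (i + 1) < μ.rowLen i) (T : SYT μ)
    (he : T.entry i (μ.rowLen i - 1) = μ.card) : SYT (μ.eraseRow i) where
  entry a b := if (a, b) = (i, μ.rowLen i - 1) then 0 else T.entry a b
  row_strict := by
    intro a j1 j2 hj hm
    rw [mem_eraseRow h] at hm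
    have hne1 : (a, j1) ≠ (i, μ.rowLen i - 1) := by
      intro heq
      obtain ⟨rfl, rfl⟩ := pair_eq heq
      have := mem_iff_lt_rowLen.1 hm.1
      omega
    simp only [if_neg hne1, if_neg hm.2]
    exact T.row_strict a j1 j2 hj hm.1
  col_strict := by
    intro a1 a2 b ha hm
    rw [mem_eraseRow h] at hm
    have hne1 : (a1, b) ≠ (i, μ.rowLen i - 1) := by
      intro heq
      obtain ⟨rfl, hb⟩ := pair_eq heq
      have h5 : (a1 + 1, b) ∈ μ := μ.up_left_mem ha le_rfl hm.1
      have h6 := mem_iff_lt_rowLen.1 h5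
      omega
    simp only [if_neg hne1, if_neg hm.2]
    exact T.col_strict a1 a2 b ha hm.1
  zeros := by
    intro a b hnm
    by_cases hc : (a, b) = (i, μ.rowLen i - 1)
    · simp only [if_pos hc]
    · simp only [if_neg hc]
      refine T.zeros a b fun hmem => hnm ?_
      exact (mem_eraseRow h).2 ⟨hmem, hc⟩
  mem_range := by
    intro a b hm
    rw [mem_eraseRow h] at hm
    simp only [if_neg hm.2]
    have h1 := T.mem_range a b hm.1
    have hne : T.entry a b ≠ μ.card := by
      intro heq
      exact hm.2 ((T.bij μ.card (card_pos_of_corner h) le_rfl).unique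
        ⟨hm.1, heq⟩ ⟨corner_mem h, he⟩)
    rw [card_eraseRow h]
    omega
  bij := by
    intro m h1 h2
    rw [card_eraseRow h] at h2
    have hcard := card_pos_of_corner h
    obtain ⟨d, ⟨hdμ, hde⟩, huniq⟩ := T.bij m h1 (by omega)
    have hdc : d ≠ (i, μ.rowLen i - 1) := by
      rintro rfl
      rw [he] at hde
      omega
    refine ⟨d, ⟨(mem_eraseRow h).2 ⟨hdμ, hdc⟩, ?_⟩, ?_⟩
    · simp only [if_neg hdc]
      exact hde
    · rintro y ⟨hy1, hy2⟩
      rw [mem_eraseRow h] at hy1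
      simp only [if_neg hy1.2] at hy2
      exact huniq y ⟨hy1.1, hy2⟩

def grow {i : ℕ} (h : μ.rowLen (i + 1) < μ.rowLen i) (T' : SYT (μ.eraseRow i)) : SYT μ where
  entry a b := if (a, b) = (i, μ.rowLen i - 1) then μ.card else T'.entry a b
  row_strict := by
    intro a j1 j2 hj hm
    by_cases h2 : (a, j2) = (i, μ.rowLen i - 1)
    · simp only [if_pos h2]
      obtain ⟨rfl, hj2⟩ := pair_eq h2
      have hne1 : (a, j1) ≠ (a, μ.rowLen a - 1) := by
        intro heq
        obtain ⟨-, h4⟩ := pair_eq heq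
        omega
      simp only [if_neg hne1]
      have hmem' : (a, j1) ∈ μ.eraseRow a :=
        (mem_eraseRow h).2 ⟨μ.up_left_mem le_rfl (by omega) hm, hne1⟩
      have h5 := (T'.mem_range a j1 hmem').2
      rw [card_eraseRow h] at h5
      have := card_pos_of_corner h
      omega
    · simp only [if_neg h2]
      have hne1 : (a, j1) ≠ (i, μ.rowLen i - 1) := by
        intro heq
        obtain ⟨rfl, rfl⟩ := pair_eq heq
        have := mem_iff_lt_rowLen.1 hm
        omega
      simp only [if_neg hne1]
      exact T'.row_strict a j1 j2 hj ((mem_eraseRow h).2 ⟨hm, h2⟩)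
  col_strict := by
    intro a1 a2 b ha hm
    by_cases h2 : (a2, b) = (i, μ.rowLen i - 1)
    · simp only [if_pos h2]
      obtain ⟨rfl, hb⟩ := pair_eq h2
      have hne1 : (a1, b) ≠ (a2, μ.rowLen a2 - 1) := by
        intro heq
        obtain ⟨h4, -⟩ := pair_eq heq
        omega
      simp only [if_neg hne1]
      have hmem' : (a1, b) ∈ μ.eraseRow a2 :=
        (mem_eraseRow h).2 ⟨μ.up_left_mem (le_of_lt ha) le_rfl hm, hne1⟩
      have h5 := (T'.mem_range a1 b hmem').2
      rw [card_eraseRow h] at h5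
      have := card_pos_of_corner h
      omega
    · simp only [if_neg h2]
      have hne1 : (a1, b) ≠ (i, μ.rowLen i - 1) := by
        intro heq
        obtain ⟨rfl, hb⟩ := pair_eq heq
        have h5 : (a1 + 1, b) ∈ μ := μ.up_left_mem ha le_rfl hm
        have h6 := mem_iff_lt_rowLen.1 h5
        omega
      simp only [if_neg hne1]
      exact T'.col_strict a1 a2 b ha ((mem_eraseRow h).2 ⟨hm, h2⟩)
  zeros := by
    intro a b hnm
    have hne : (a, b) ≠ (i, μ.rowLen i - 1) := fun heq => hnm (heq ▸ corner_mem h)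
    simp only [if_neg hne]
    exact T'.zeros a b fun hmem => hnm ((mem_eraseRow h).1 hmem).1
  mem_range := by
    intro a b hm
    by_cases hc : (a, b) = (i, μ.rowLen i - 1)
    · simp only [if_pos hc]
      exact ⟨card_pos_of_corner h, le_rfl⟩
    · simp only [if_neg hc]
      have h5 := T'.mem_range a b ((mem_eraseRow h).2 ⟨hm, hc⟩)
      rw [card_eraseRow h] at h5
      omega
  bij := by
    intro m h1 h2
    by_cases hm : m = μ.card
    · subst hm
      refine ⟨(i, μ.rowLen i - 1), ⟨corner_mem h, by simp⟩, ?_⟩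
      rintro y ⟨hy1, hy2⟩
      by_contra hyne
      simp only [if_neg (show (y.1, y.2) ≠ (i, μ.rowLen i - 1) from hyne)] at hy2
      have h5 := (T'.mem_range y.1 y.2 ((mem_eraseRow h).2 ⟨hy1, hyne⟩)).2
      rw [card_eraseRow h] at h5
      have := card_pos_of_corner h
      omega
    · obtain ⟨d, ⟨hdμ', hde'⟩, huniq⟩ := T'.bij m h1 (by rw [card_eraseRow h]; omega)
      rw [mem_eraseRow h] at hdμ'
      refine ⟨d, ⟨hdμ'.1, ?_⟩, ?_⟩
      · simp only [if_neg (show (d.1, d.2) ≠ (i, μ.rowLen i - 1) from hdμ'.2)]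
        exact hde'
      · rintro y ⟨hy1, hy2⟩
        have hyne : y ≠ (i, μ.rowLen i - 1) := by
          rintro rfl
          simp only [if_pos rfl] at hy2
          exact hm hy2.symm
        simp only [if_neg (show (y.1, y.2) ≠ (i, μ.rowLen i - 1) from hyne)] at hy2
        exact huniq y ⟨(mem_eraseRow h).2 ⟨hy1, hyne⟩, hy2⟩

end SYT

namespace SYT

open YoungDiagram

variable {μ : YoungDiagram}

noncomputable def rowOf (hpos : 0 < μ.card) (T : SYT μ) : ↥μ.cornerRows :=
  ⟨(maxCell T hpos).1, mem_cornerRows.2 (maxCell_corner T hpos).1⟩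

theorem entry_max_of_rowOf (hpos : 0 < μ.card) (T : SYT μ) {i : ℕ}
    (hT : ((rowOf hpos T : ↥μ.cornerRows) : ℕ) = i) :
    T.entry i (μ.rowLen i - 1) = μ.card := by
  have h1 : (maxCell T hpos).1 = i := hT
  have h2 := (maxCell_corner T hpos).2
  have h3 := (maxCell_spec T hpos).2
  rw [h1] at h2 h3
  rw [← h2]
  exact h3

noncomputable def fiberEquiv (hpos : 0 < μ.card) (i : ↥μ.cornerRows) :
    {T : SYT μ // rowOf hpos T = i} ≃ SYT (μ.eraseRow (i : ℕ)) where
  toFun := fun p =>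
    shrink (mem_cornerRows.1 i.2) p.1
      (entry_max_of_rowOf hpos p.1 (congrArg Subtype.val p.2))
  invFun := fun T' => ⟨grow (mem_cornerRows.1 i.2) T', by
    have hcorner := mem_cornerRows.1 i.2
    have hmax : ((i : ℕ), μ.rowLen (i : ℕ) - 1) =
        maxCell (grow hcorner T') hpos := by
      apply maxCell_unique
      exact ⟨corner_mem hcorner, by simp [grow]⟩
    apply Subtype.ext
    show (maxCell (grow hcorner T') hpos).1 = (i : ℕ)
    rw [← hmax]⟩
  left_inv := by
    rintro ⟨T, hT⟩
    apply Subtype.ext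
    apply ext'
    funext a b
    show (if (a, b) = ((i : ℕ), μ.rowLen (i : ℕ) - 1) then μ.card
      else if (a, b) = ((i : ℕ), μ.rowLen (i : ℕ) - 1) then 0 else T.entry a b)
        = T.entry a b
    by_cases hc : (a, b) = ((i : ℕ), μ.rowLen (i : ℕ) - 1)
    · rw [if_pos hc]
      obtain ⟨rfl, rfl⟩ := pair_eq hc
      exact (entry_max_of_rowOf hpos T (congrArg Subtype.val hT)).symm
    · rw [if_neg hc, if_neg hc]
  right_inv := by
    intro T'
    apply ext'
    funext a b
    show (if (a, b) = ((i : ℕ), μ.rowLen (i : ℕ) - 1) then 0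
      else if (a, b) = ((i : ℕ), μ.rowLen (i : ℕ) - 1) then μ.card else T'.entry a b)
        = T'.entry a b
    by_cases hc : (a, b) = ((i : ℕ), μ.rowLen (i : ℕ) - 1)
    · rw [if_pos hc]
      refine (T'.zeros a b ?_).symm
      intro hmem
      exact ((mem_eraseRow (mem_cornerRows.1 i.2)).1 hmem).2 hc
    · rw [if_neg hc, if_neg hc]

theorem card_branching (μ : YoungDiagram) (hpos : 0 < μ.card) :
    Nat.card (SYT μ) = ∑ i ∈ μ.cornerRows, Nat.card (SYT (μ.eraseRow i)) := by
  classical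
  letI : ∀ i : ↥μ.cornerRows, Fintype {T : SYT μ // rowOf hpos T = i} :=
    fun i => Fintype.ofFinite _
  calc Nat.card (SYT μ)
      = Nat.card (Σ i : ↥μ.cornerRows, {T : SYT μ // rowOf hpos T = i}) :=
        (Nat.card_congr (Equiv.sigmaFiberEquiv (rowOf hpos))).symm
    _ = ∑ i : ↥μ.cornerRows, Nat.card {T : SYT μ // rowOf hpos T = i} := by
        rw [Nat.card_eq_fintype_card, Fintype.card_sigma]
        exact Finset.sum_congr rfl fun i _ => (Nat.card_eq_fintype_card).symm
    _ = ∑ i : ↥μ.cornerRows, Nat.card (SYT (μ.eraseRow (i : ℕ))) :=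
        Finset.sum_congr rfl fun i _ => Nat.card_congr (fiberEquiv hpos i)
    _ = ∑ i ∈ μ.cornerRows, Nat.card (SYT (μ.eraseRow i)) := by
        rw [← Finset.sum_attach μ.cornerRows (fun i => Nat.card (SYT (μ.eraseRow i)))]
        rfl

end SYT

section KeyIdentity

open Polynomial Finset

variable {ι : Type*} [DecidableEq ι]

theorem my_natDegree (s : Finset ι) (w : ι → ℚ) :
    (∏ j ∈ s, (X - C (w j))).natDegree = s.card := by
  rw [natDegree_prod_of_monic _ _ fun j _ => monic_X_sub_C _]
  simp [natDegree_X_sub_C]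

theorem my_coeff_card (s : Finset ι) (w : ι → ℚ) :
    (∏ j ∈ s, (X - C (w j))).coeff s.card = 1 := by
  have hm : (∏ j ∈ s, (X - C (w j))).Monic :=
    monic_prod_of_monic _ _ fun j _ => monic_X_sub_C _
  have hd := my_natDegree s w
  conv_lhs => rw [← hd]
  exact hm.coeff_natDegree

theorem my_coeff_zero (s : Finset ι) (w : ι → ℚ) {m : ℕ} (hm : s.card < m) :
    (∏ j ∈ s, (X - C (w j))).coeff m = 0 :=
  coeff_eq_zero_of_natDegree_lt (by rw [my_natDegree]; exact hm)

theorem my_coeff_one (s : Finset ι) (w : ι → ℚ) (h : 0 < s.card) :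
    (∏ j ∈ s, (X - C (w j))).coeff (s.card - 1) = -∑ j ∈ s, w j :=
  prod_X_sub_C_coeff_card_pred s w h

theorem my_coeff_two (s : Finset ι) (w : ι → ℚ) (h2 : 2 ≤ s.card) :
    2 * (∏ j ∈ s, (X - C (w j))).coeff (s.card - 2)
      = (∑ j ∈ s, w j) ^ 2 - ∑ j ∈ s, w j ^ 2 := by
  induction s using Finset.cons_induction with
  | empty => simp at h2
  | cons a t ha ih =>
    rw [Finset.prod_cons, Finset.sum_cons, Finset.sum_cons]
    rw [Finset.card_cons] at h2 ⊢
    rcases Nat.lt_or_ge t.card 2 with hc | hc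
    · have hc1 : t.card = 1 := by omega
      obtain ⟨b, rfl⟩ := Finset.card_eq_one.1 hc1
      rw [Finset.prod_singleton, Finset.sum_singleton, Finset.sum_singleton]
      rw [Finset.card_singleton]
      have hco : ((X - C (w a)) * (X - C (w b))).coeff 0 = w a * w b := by
        rw [coeff_zero_eq_eval_zero]
        simp only [eval_mul, eval_sub, eval_X, eval_C]
        ring
      rw [show (1 : ℕ) + 1 - 2 = 0 from rfl, hco]
      ring
    · have ih' := ih hc
      have h1 : t.card + 1 - 2 = (t.card - 2) + 1 := by omega
      have key : ((X - C (w a)) * ∏ j ∈ t, (X - C (w j))).coeff (t.card + 1 - 2)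
          = (∏ j ∈ t, (X - C (w j))).coeff (t.card - 2)
            - w a * (∏ j ∈ t, (X - C (w j))).coeff (t.card - 1) := by
        rw [sub_mul, coeff_sub, coeff_C_mul, h1, coeff_X_mul,
          show t.card - 2 + 1 = t.card - 1 from by omega]
      rw [key]
      have hone := my_coeff_one t w (by omega)
      rw [hone] at *
      have : 2 * ((∏ j ∈ t, (X - C (w j))).coeff (t.card - 2)
          - w a * -∑ j ∈ t, w j)
          = 2 * (∏ j ∈ t, (X - C (w j))).coeff (t.card - 2)
            + 2 * w a * ∑ j ∈ t, w j := by ring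
      rw [this, ih']
      ring

theorem keyratio (s : Finset ι) (v : ι → ℚ) (hinj : Set.InjOn v ↑s) :
    ∑ m ∈ s, v m * ∏ j ∈ s.erase m, ((v m - 1 - v j) / (v m - v j))
      = (∑ i ∈ s, v i) - (s.card : ℚ) * ((s.card : ℚ) - 1) / 2 := by
  rcases Nat.lt_or_ge s.card 2 with hk | hk
  · rcases Nat.lt_or_ge s.card 1 with hk0 | hk1
    · have : s = ∅ := Finset.card_eq_zero.1 (by omega)
      subst this; simp
    · have hc1 : s.card = 1 := by omega
      obtain ⟨a, rfl⟩ := Finset.card_eq_one.1 hc1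
      simp
  -- main case
  set k := s.card with hkdef
  set S := ∑ i ∈ s, v i with hSdef
  set p := ∏ j ∈ s, (X - C (v j)) with hpdef
  set p1 := ∏ j ∈ s, (X - C (v j + 1)) with hp1def
  set q := X * p1 - (X - C (k : ℚ)) * p with hqdef
  have hsum1 : ∑ j ∈ s, (v j + 1) = S + k := by
    rw [Finset.sum_add_distrib, Finset.sum_const, nsmul_eq_mul, mul_one]
  have hp_k : p.coeff k = 1 := my_coeff_card s v
  have hp1_k : p1.coeff k = 1 := my_coeff_card s _
  have hp_k1 : p.coeff (k - 1) = -S := my_coeff_one s v (by omega)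
  have hp1_k1 : p1.coeff (k - 1) = -(S + k) := by
    rw [my_coeff_one s _ (by omega), hsum1]
  -- degree bound
  have hqdeg : q.degree < (k : ℕ) := by
    rw [degree_lt_iff_coeff_zero]
    intro m hm
    obtain ⟨m', rfl⟩ : ∃ m', m = m' + 1 := ⟨m - 1, by omega⟩
    rw [hqdef, coeff_sub, coeff_X_mul, sub_mul, coeff_sub, coeff_X_mul, coeff_C_mul]
    rcases eq_or_lt_of_le (show k ≤ m' + 1 from by exact_mod_cast hm) with he | hlt
    · have hm' : m' = k - 1 := by omega
      subst hm'
      rw [hp_k1, hp1_k1]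
      have : k - 1 + 1 = k := by omega
      rw [this, hp_k]
      ring
    · have hm' : k ≤ m' := by omega
      rcases eq_or_lt_of_le hm' with he2 | hlt2
      · rw [← he2, hp_k, hp1_k, my_coeff_zero s v (by omega)]
        ring
      · rw [my_coeff_zero s v (by omega), my_coeff_zero s _ (by omega),
          my_coeff_zero s v (by omega)]
        ring
  -- evaluation at nodes
  have hq_eval : ∀ i ∈ s, q.eval (v i)
      = -(v i * ∏ j ∈ s.erase i, (v i - 1 - v j)) := by
    intro i hi
    have hp_eval : p.eval (v i) = 0 := by
      rw [hpdef, eval_prod]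
      exact Finset.prod_eq_zero hi (by simp)
    have hp1_eval : p1.eval (v i) = -(∏ j ∈ s.erase i, (v i - 1 - v j)) := by
      rw [hp1def, eval_prod]
      rw [← Finset.mul_prod_erase _ _ hi]
      simp only [eval_sub, eval_X, eval_C]
      rw [show v i - (v i + 1) = -1 by ring]
      rw [neg_one_mul]
      congr 1
      exact Finset.prod_congr rfl fun j _ => by ring
    rw [hqdef]
    simp only [eval_sub, eval_mul, eval_X, eval_C, hp_eval, hp1_eval]
    ring
  -- interpolation
  have hinterp := Lagrange.eq_interpolate hinj hqdeg
  -- coefficient k-1 of q directly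
  have hq_coeff : q.coeff (k - 1) = ((k : ℚ) ^ 2 - k) / 2 - S := by
    have hsplit : q.coeff (k - 1)
        = p1.coeff (k - 2) - (p.coeff (k - 2) - k * p.coeff (k - 1)) := by
      rw [hqdef, coeff_sub, sub_mul, coeff_sub, coeff_C_mul]
      have h1 : k - 1 = (k - 2) + 1 := by omega
      rw [h1, coeff_X_mul, coeff_X_mul,
        show k - 2 + 1 = k - 1 from by omega]
    have h2a := my_coeff_two s v hk
    have h2b := my_coeff_two s (fun j => v j + 1) hk
    have hsq : ∑ j ∈ s, (v j + 1) ^ 2 = (∑ j ∈ s, v j ^ 2) + 2 * S + k := by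
      have : ∀ j ∈ s, (v j + 1) ^ 2 = v j ^ 2 + 2 * v j + 1 := fun j _ => by ring
      rw [Finset.sum_congr rfl this, Finset.sum_add_distrib, Finset.sum_add_distrib,
        Finset.sum_const, nsmul_eq_mul, mul_one, ← Finset.mul_sum]
    rw [hsum1, hsq] at h2b
    rw [hsplit, hp_k1]
    have : 2 * (q.coeff (k-1)) = (k : ℚ)^2 - k - 2 * S := by
      rw [hsplit, hp_k1]
      nlinarith [h2a, h2b]
    linarith
  -- coefficient k-1 of the interpolation
  have hbasis : ∀ i ∈ s, (Lagrange.basis s v i).coeff (k - 1)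
      = ∏ j ∈ s.erase i, (v i - v j)⁻¹ := by
    intro i hi
    have : Lagrange.basis s v i
        = C (∏ j ∈ s.erase i, (v i - v j)⁻¹) * ∏ j ∈ s.erase i, (X - C (v j)) := by
      rw [Lagrange.basis]
      rw [show (fun j => Lagrange.basisDivisor (v i) (v j))
        = fun j => C ((v i - v j)⁻¹) * (X - C (v j)) from rfl]
      rw [Finset.prod_mul_distrib, map_prod]
    rw [this, coeff_C_mul]
    have hcard : (s.erase i).card = k - 1 := by
      rw [Finset.card_erase_of_mem hi]
    rw [← hcard, my_coeff_card, mul_one]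
  have hcoeff_interp : q.coeff (k - 1)
      = ∑ i ∈ s, q.eval (v i) * ∏ j ∈ s.erase i, (v i - v j)⁻¹ := by
    conv_lhs => rw [hinterp]
    rw [Lagrange.interpolate_apply, finset_sum_coeff]
    exact Finset.sum_congr rfl fun i hi => by rw [coeff_C_mul, hbasis i hi]
  -- put it together
  have hterm : ∀ i ∈ s, q.eval (v i) * ∏ j ∈ s.erase i, (v i - v j)⁻¹
      = -(v i * ∏ j ∈ s.erase i, ((v i - 1 - v j) / (v i - v j))) := by
    intro i hi
    rw [hq_eval i hi]
    rw [Finset.prod_div_distrib]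
    rw [div_eq_mul_inv, ← Finset.prod_inv_distrib]
    ring
  rw [Finset.sum_congr rfl hterm, Finset.sum_neg_distrib] at hcoeff_interp
  have hkk : ((k : ℚ) * ((k : ℚ) - 1)) = (k : ℚ) ^ 2 - k := by ring
  rw [hkk]
  linarith [hcoeff_interp, hq_coeff]

end KeyIdentity

section Del

open Finset

def del (k : ℕ) (v : ℕ → ℚ) : ℚ :=
  ∏ j ∈ Finset.range k, ∏ i ∈ Finset.range j, (v i - v j)

theorem del_congr {k : ℕ} {v w : ℕ → ℚ} (h : ∀ i < k, v i = w i) :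
    del k v = del k w := by
  unfold del
  refine Finset.prod_congr rfl fun j hj => Finset.prod_congr rfl fun i hi => ?_
  rw [h i (lt_trans (Finset.mem_range.1 hi) (Finset.mem_range.1 hj)),
    h j (Finset.mem_range.1 hj)]

theorem del_eq_zero {k : ℕ} {v : ℕ → ℚ} {i j : ℕ} (hij : i < j) (hj : j < k)
    (h : v i = v j) : del k v = 0 := by
  unfold del
  apply Finset.prod_eq_zero (Finset.mem_range.2 hj)
  apply Finset.prod_eq_zero (Finset.mem_range.2 hij)
  rw [h, sub_self]

theorem range_erase_eq {m k : ℕ} (hm : m < k) :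
    (Finset.range k).erase m = Finset.range m ∪ Finset.Ico (m + 1) k := by
  ext x
  simp only [Finset.mem_erase, Finset.mem_range, Finset.mem_union, Finset.mem_Ico]
  omega

theorem del_update {k m : ℕ} (hm : m < k) (v : ℕ → ℚ)
    (hinj : Set.InjOn v (Finset.range k : Set ℕ)) :
    del k (Function.update v m (v m - 1))
      = del k v * ∏ j ∈ (Finset.range k).erase m, ((v m - 1 - v j) / (v m - v j)) := by
  classical
  set w := Function.update v m (v m - 1) with hw
  set r : ℕ → ℕ → ℚ := fun i j =>
    if i = m then (v m - 1 - v j) / (v m - v j)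
    else if j = m then (v m - 1 - v i) / (v m - v i) else 1 with hr
  have hne : ∀ {a b : ℕ}, a < k → b < k → a ≠ b → v a - v b ≠ 0 := by
    intro a b ha hb hab hzero
    exact hab (hinj (by simpa using ha) (by simpa using hb)
      (by linarith [sub_eq_zero.1 hzero]))
  have hfact : ∀ j < k, ∀ i < j, w i - w j = (v i - v j) * r i j := by
    intro j hj i hij
    have hik : i < k := lt_trans hij hj
    by_cases hi : i = m
    · rw [hi]
      rw [hi] at hij
      have hjm : j ≠ m := by omega
      have hd : v m - v j ≠ 0 := hne hm hj (by omega)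
      simp only [hw, hr, Function.update_self, Function.update_of_ne hjm,
        eq_self_iff_true, if_true]
      field_simp
    · by_cases hjm : j = m
      · rw [hjm]
        rw [hjm] at hij
        have hd : v m - v i ≠ 0 := hne hm hik fun hh => hi hh.symm
        simp only [hw, hr, Function.update_self, Function.update_of_ne hi,
          eq_self_iff_true, if_true]
        rw [if_neg hi]
        field_simp
        ring
      · simp only [hw, hr, Function.update_of_ne hi, Function.update_of_ne hjm]
        rw [if_neg hi, if_neg hjm, mul_one]
  have main : del k w = del k v * ∏ j ∈ Finset.range k, ∏ i ∈ Finset.range j, r i j := by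
    unfold del
    rw [← Finset.prod_mul_distrib]
    refine Finset.prod_congr rfl fun j hj => ?_
    rw [← Finset.prod_mul_distrib]
    exact Finset.prod_congr rfl fun i hi =>
      hfact j (Finset.mem_range.1 hj) i (Finset.mem_range.1 hi)
  have hinner : ∀ j ∈ Finset.range k, (∏ i ∈ Finset.range j, r i j)
      = if j = m then ∏ i ∈ Finset.range m, ((v m - 1 - v i) / (v m - v i))
        else if m < j then (v m - 1 - v j) / (v m - v j) else 1 := by
    intro j hj
    by_cases hjm : j = m
    · rw [if_pos hjm, hjm]
      refine Finset.prod_congr rfl fun i hi => ?_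
      have him : i ≠ m := by have := Finset.mem_range.1 hi; omega
      simp only [hr, eq_self_iff_true, if_true]
      rw [if_neg him]
    · rw [if_neg hjm]
      by_cases hmj : m < j
      · rw [if_pos hmj]
        rw [Finset.prod_eq_single m]
        · simp only [hr, eq_self_iff_true, if_true]
        · intro b hb hbm
          simp only [hr]; rw [if_neg hbm, if_neg hjm]
        · intro hnm; exact absurd (Finset.mem_range.2 hmj) hnm
      · rw [if_neg hmj]
        apply Finset.prod_eq_one
        intro i hi
        have him : i ≠ m := by have := Finset.mem_range.1 hi; omega
        simp only [hr]; rw [if_neg him, if_neg hjm]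
  have hdisj : Disjoint (Finset.range m) (Finset.Ico (m + 1) k) := by
    rw [Finset.disjoint_left]
    intro a ha hb
    simp only [Finset.mem_range] at ha
    simp only [Finset.mem_Ico] at hb
    omega
  rw [main, Finset.prod_congr rfl hinner,
    ← Finset.mul_prod_erase _ _ (Finset.mem_range.2 hm), if_pos rfl]
  rw [range_erase_eq hm, Finset.prod_union hdisj, Finset.prod_union hdisj]
  have hB1 : (∏ j ∈ Finset.range m,
      (if j = m then ∏ i ∈ Finset.range m, ((v m - 1 - v i) / (v m - v i))
        else if m < j then (v m - 1 - v j) / (v m - v j) else 1)) = 1 := by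
    apply Finset.prod_eq_one
    intro j hj
    have := Finset.mem_range.1 hj
    rw [if_neg (by omega), if_neg (by omega)]
  have hB2 : (∏ j ∈ Finset.Ico (m + 1) k,
      (if j = m then ∏ i ∈ Finset.range m, ((v m - 1 - v i) / (v m - v i))
        else if m < j then (v m - 1 - v j) / (v m - v j) else 1))
      = ∏ j ∈ Finset.Ico (m + 1) k, ((v m - 1 - v j) / (v m - v j)) := by
    refine Finset.prod_congr rfl fun j hj => ?_
    have := Finset.mem_Ico.1 hj
    rw [if_neg (by omega), if_pos (by omega)]
  rw [hB1, hB2]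
  ring

theorem keydel (k : ℕ) (v : ℕ → ℚ)
    (hdec : ∀ i j, i < j → j < k → v j < v i) :
    ∑ m ∈ Finset.range k, v m * del k (Function.update v m (v m - 1))
      = ((∑ i ∈ Finset.range k, v i) - (k : ℚ) * ((k : ℚ) - 1) / 2) * del k v := by
  have hinj : Set.InjOn v (Finset.range k : Set ℕ) := by
    intro a ha b hb hab
    simp only [Finset.coe_range, Set.mem_Iio] at ha hb
    by_contra hne
    rcases Nat.lt_or_ge a b with h | h
    · exact absurd hab (ne_of_gt (hdec a b h hb))
    · have h' : b < a := by omega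
      exact absurd hab (ne_of_lt (hdec b a h' ha))
  have h1 : ∀ m ∈ Finset.range k, v m * del k (Function.update v m (v m - 1))
      = del k v * (v m * ∏ j ∈ (Finset.range k).erase m, ((v m - 1 - v j) / (v m - v j))) := by
    intro m hm
    rw [del_update (Finset.mem_range.1 hm) v hinj]
    ring
  rw [Finset.sum_congr rfl h1, ← Finset.mul_sum]
  rw [keyratio (Finset.range k) v hinj, Finset.card_range]
  ring

end Del

section Frobenius

open Finset YoungDiagram

theorem gauss_q (k : ℕ) : ∑ i ∈ Finset.range k, ((k : ℚ) - 1 - i)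
    = (k : ℚ) * ((k : ℚ) - 1) / 2 := by
  rcases Nat.eq_zero_or_pos k with h0 | hpos
  · subst h0; simp
  have h1 : ∀ i ∈ Finset.range k, ((k : ℚ) - 1 - i) = ((k - 1 - i : ℕ) : ℚ) := by
    intro i hi
    have := Finset.mem_range.1 hi
    rw [Nat.cast_sub (by omega), Nat.cast_sub (by omega)]
    push_cast
    ring
  rw [Finset.sum_congr rfl h1, ← Nat.cast_sum]
  rw [Finset.sum_range_reflect (fun i => i) k]
  have h2 := Finset.sum_range_id_mul_two k
  have h4 : (∑ i ∈ Finset.range k, (i : ℚ)) * 2 = (k : ℚ) * ((k : ℚ) - 1) := by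
    have h5 := congrArg (fun x : ℕ => (x : ℚ)) h2
    push_cast [Nat.cast_sub (by omega : 1 ≤ k)] at h5
    linarith
  have h5 : (((∑ i ∈ Finset.range k, i) : ℕ) : ℚ) = ∑ i ∈ Finset.range k, (i : ℚ) :=
    Nat.cast_sum _ _
  linarith

theorem fact_base (k : ℕ) : ∏ i ∈ Finset.range k, ((Nat.factorial (k - 1 - i)) : ℚ)
    = ∏ i ∈ Finset.range k, ((Nat.factorial i) : ℚ) :=
  Finset.prod_range_reflect (fun i => ((Nat.factorial i) : ℚ)) k

theorem del_base (k : ℕ) : del k (fun i => (k : ℚ) - 1 - i)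
    = ∏ i ∈ Finset.range k, ((Nat.factorial i) : ℚ) := by
  unfold del
  refine Finset.prod_congr rfl fun j hj => ?_
  have h1 : ∀ i ∈ Finset.range j, ((k : ℚ) - 1 - i) - ((k : ℚ) - 1 - j) = (j : ℚ) - i := by
    intro i hi; ring
  rw [Finset.prod_congr rfl h1]
  have h2 : ∀ i ∈ Finset.range j, ((j : ℚ) - i) = ((j - i : ℕ) : ℚ) := by
    intro i hi
    have := Finset.mem_range.1 hi
    rw [Nat.cast_sub (by omega)]
  rw [Finset.prod_congr rfl h2, ← Nat.cast_prod]
  congr 1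
  calc ∏ i ∈ Finset.range j, (j - i)
      = ∏ i ∈ Finset.range j, (j - (j - 1 - i)) := by
        rw [Finset.prod_range_reflect (fun i => j - i) j]
    _ = ∏ i ∈ Finset.range j, (i + 1) := by
        refine Finset.prod_congr rfl fun i hi => ?_
        have := Finset.mem_range.1 hi
        omega
    _ = Nat.factorial j := Finset.prod_range_add_one_eq_factorial j

theorem rowLen_eq_zero_of_ge {μ : YoungDiagram} {k i : ℕ} (hk : μ.colLen 0 ≤ k)
    (hi : k ≤ i) : μ.rowLen i = 0 := by
  by_contra hpos
  have h1 : (i, 0) ∈ μ := mem_iff_lt_rowLen.2 (by omega)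
  have := mem_iff_lt_colLen.1 h1
  omega

theorem frobeniusSYT (n : ℕ) : ∀ (μ : YoungDiagram), μ.card = n → ∀ k, μ.colLen 0 ≤ k →
    (Nat.card (SYT μ) : ℚ)
        * ∏ i ∈ Finset.range k, ((Nat.factorial (μ.rowLen i + (k - 1 - i))) : ℚ)
      = (Nat.factorial n : ℚ) * del k (fun i => (μ.rowLen i : ℚ) + (k : ℚ) - 1 - i) := by
  induction n using Nat.strong_induction_on with
  | _ n ih =>
  intro μ hcard k hk
  rcases Nat.eq_zero_or_pos n with hn0 | hnpos
  · subst hn0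
    have hrow0 : ∀ i, μ.rowLen i = 0 := by
      intro i
      by_contra hpos
      have h1 : (i, 0) ∈ μ := mem_iff_lt_rowLen.2 (by omega)
      have h2 : 0 < μ.card := Finset.card_pos.2 ⟨_, (mem_cells _).2 h1⟩
      omega
    have hA : (∏ i ∈ Finset.range k, ((Nat.factorial (μ.rowLen i + (k - 1 - i))) : ℚ))
        = ∏ i ∈ Finset.range k, ((Nat.factorial (k - 1 - i)) : ℚ) :=
      Finset.prod_congr rfl fun i _ => by simp [hrow0 i]
    have hB : del k (fun i => (μ.rowLen i : ℚ) + (k : ℚ) - 1 - i)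
        = del k (fun i => (k : ℚ) - 1 - i) :=
      del_congr fun i _ => by simp [hrow0 i]
    rw [SYT.card_of_card_eq_zero hcard, hA, hB, fact_base, del_base, Nat.factorial_zero]
  · -- inductive step
    have hpos : 0 < μ.card := hcard ▸ hnpos
    set v : ℕ → ℚ := fun i => (μ.rowLen i : ℚ) + (k : ℚ) - 1 - i with hv
    have hcast9 : ∀ i < k, ((k - 1 - i : ℕ) : ℚ) = (k : ℚ) - 1 - i := by
      intro i hi
      rw [Nat.cast_sub (by omega), Nat.cast_sub (by omega)]
      push_cast
      ring
    have hvcast : ∀ i < k, v i = ((μ.rowLen i + (k - 1 - i) : ℕ) : ℚ) := by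
      intro i hi
      simp only [hv]
      rw [Nat.cast_add, hcast9 i hi]
      ring
    have hcorner_sub : μ.cornerRows ⊆ Finset.range k := by
      intro i hi
      have h1 := (Finset.mem_filter.1 hi).1
      rw [Finset.mem_range] at h1 ⊢
      omega
    -- per-corner identity
    have hterm : ∀ i ∈ μ.cornerRows,
        (Nat.card (SYT (μ.eraseRow i)) : ℚ)
            * ∏ j ∈ Finset.range k, ((Nat.factorial (μ.rowLen j + (k - 1 - j))) : ℚ)
          = (Nat.factorial (n - 1) : ℚ) * (v i * del k (Function.update v i (v i - 1))) := by
      intro i hi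
      have hcor := mem_cornerRows.1 hi
      have hik : i < k := Finset.mem_range.1 (hcorner_sub hi)
      have hrpos : 0 < μ.rowLen i := by omega
      have hcard' : (μ.eraseRow i).card = n - 1 := by rw [card_eraseRow hcor]; omega
      have hcol' : (μ.eraseRow i).colLen 0 ≤ k := le_trans (colLen_zero_eraseRow_le i) hk
      have IH := ih (n - 1) (by omega) (μ.eraseRow i) hcard' k hcol'
      -- relate the two products of factorials
      have h8 : (Nat.factorial (μ.rowLen i + (k - 1 - i)) : ℚ)
          = ((μ.rowLen i + (k - 1 - i) : ℕ) : ℚ)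
            * (Nat.factorial ((μ.eraseRow i).rowLen i + (k - 1 - i)) : ℚ) := by
        rw [rowLen_eraseRow hcor i, if_pos rfl]
        have h5 : μ.rowLen i + (k - 1 - i) = (μ.rowLen i - 1 + (k - 1 - i)) + 1 := by omega
        rw [h5, Nat.factorial_succ, Nat.cast_mul]
      have hprod : ∏ j ∈ Finset.range k, ((Nat.factorial (μ.rowLen j + (k - 1 - j))) : ℚ)
          = ((μ.rowLen i + (k - 1 - i) : ℕ) : ℚ)
            * ∏ j ∈ Finset.range k,
              ((Nat.factorial ((μ.eraseRow i).rowLen j + (k - 1 - j))) : ℚ) := by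
        rw [← Finset.mul_prod_erase _
            (fun j => ((Nat.factorial (μ.rowLen j + (k - 1 - j))) : ℚ))
            (Finset.mem_range.2 hik),
          ← Finset.mul_prod_erase _
            (fun j => ((Nat.factorial ((μ.eraseRow i).rowLen j + (k - 1 - j))) : ℚ))
            (Finset.mem_range.2 hik)]
        have h6 : ∏ j ∈ (Finset.range k).erase i,
            ((Nat.factorial (μ.rowLen j + (k - 1 - j))) : ℚ)
            = ∏ j ∈ (Finset.range k).erase i,
              ((Nat.factorial ((μ.eraseRow i).rowLen j + (k - 1 - j))) : ℚ) := by
          refine Finset.prod_congr rfl fun j hj => ?_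
          rw [rowLen_eraseRow hcor j, if_neg (Finset.mem_erase.1 hj).1]
        rw [h6, h8]
        ring
      -- relate the two dels
      have hdel : del k (fun j => ((μ.eraseRow i).rowLen j : ℚ) + (k : ℚ) - 1 - j)
          = del k (Function.update v i (v i - 1)) := by
        apply del_congr
        intro j hj
        rw [rowLen_eraseRow hcor j]
        by_cases hji : j = i
        · subst hji
          rw [if_pos rfl, Function.update_self]
          simp only [hv]
          rw [Nat.cast_sub (by omega : 1 ≤ μ.rowLen j)]
          push_cast
          ring
        · rw [if_neg hji, Function.update_of_ne hji]
      rw [hdel] at IH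
      rw [hprod]
      have hvi : v i = ((μ.rowLen i + (k - 1 - i) : ℕ) : ℚ) := hvcast i hik
      calc ((Nat.card (SYT (μ.eraseRow i))) : ℚ)
          * (((μ.rowLen i + (k - 1 - i) : ℕ) : ℚ)
            * ∏ j ∈ Finset.range k,
              ((Nat.factorial ((μ.eraseRow i).rowLen j + (k - 1 - j))) : ℚ))
          = ((μ.rowLen i + (k - 1 - i) : ℕ) : ℚ)
            * ((Nat.card (SYT (μ.eraseRow i)) : ℚ)
              * ∏ j ∈ Finset.range k,
                ((Nat.factorial ((μ.eraseRow i).rowLen j + (k - 1 - j))) : ℚ)) := by ring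
        _ = ((μ.rowLen i + (k - 1 - i) : ℕ) : ℚ)
            * ((Nat.factorial (n - 1) : ℚ) * del k (Function.update v i (v i - 1))) := by
              rw [IH]
        _ = (Nat.factorial (n - 1) : ℚ)
            * (v i * del k (Function.update v i (v i - 1))) := by
              rw [hvi]
              ring
    -- zero terms off corners
    have hzero : ∀ i ∈ Finset.range k, i ∉ μ.cornerRows →
        v i * del k (Function.update v i (v i - 1)) = 0 := by
      intro i hi hnc
      have hik := Finset.mem_range.1 hi
      have hnlt : ¬ μ.rowLen (i + 1) < μ.rowLen i := fun hc => hnc (mem_cornerRows.2 hc)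
      have heq : μ.rowLen (i + 1) = μ.rowLen i :=
        le_antisymm (μ.rowLen_anti i (i + 1) (by omega)) (by omega)
      rcases Nat.lt_or_ge (i + 1) k with hik1 | hik1
      · have hzero' : Function.update v i (v i - 1) i = Function.update v i (v i - 1) (i + 1) := by
          rw [Function.update_self, Function.update_of_ne (by omega : i + 1 ≠ i)]
          simp only [hv]
          rw [← heq]
          push_cast
          ring
        rw [del_eq_zero (by omega : i < i + 1) hik1 hzero']
        ring
      · have hi1 : i = k - 1 := by omega
        have hrk : μ.rowLen (i + 1) = 0 := rowLen_eq_zero_of_ge hk (by omega)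
        have hri : μ.rowLen i = 0 := by omega
        have hvz : v i = 0 := by
          simp only [hv]
          rw [hri]
          push_cast
          have : (i : ℚ) = (k : ℚ) - 1 := by
            rw [hi1, Nat.cast_sub (by omega)]
            push_cast; ring
          rw [this]
          ring
        rw [hvz]
        ring
    -- assemble
    rw [SYT.card_branching μ hpos, Nat.cast_sum, Finset.sum_mul]
    rw [Finset.sum_congr rfl hterm]
    rw [← Finset.mul_sum]
    rw [Finset.sum_subset hcorner_sub (fun i hi hni => hzero i hi hni)]
    have hdec : ∀ a b, a < b → b < k → v b < v a := by
      intro a b hab hbk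
      have := μ.rowLen_anti a b (le_of_lt hab)
      simp only [hv]
      have hc : ((μ.rowLen b) : ℚ) ≤ ((μ.rowLen a) : ℚ) := by exact_mod_cast this
      have hab' : (a : ℚ) < (b : ℚ) := by exact_mod_cast hab
      linarith
    rw [keydel k v hdec]
    have hS : (∑ i ∈ Finset.range k, v i) = (n : ℚ) + (k : ℚ) * ((k : ℚ) - 1) / 2 := by
      have h1 : ∀ i ∈ Finset.range k, v i = ((μ.rowLen i : ℚ)) + ((k : ℚ) - 1 - i) := by
        intro i hi; simp only [hv]; ring
      rw [Finset.sum_congr rfl h1, Finset.sum_add_distrib, gauss_q, ← Nat.cast_sum]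
      rw [← card_eq_sum_rowLen μ hk, hcard]
    rw [hS]
    have hfac : (Nat.factorial n : ℚ) = (Nat.factorial (n - 1) : ℚ) * n := by
      have : n = (n - 1) + 1 := by omega
      rw [this, Nat.factorial_succ]
      push_cast
      ring
    rw [hfac]
    ring

end Frobenius

section Complement

open Finset YoungDiagram

theorem descFact (n : ℕ) : ∀ r, r ≤ n →
    (∏ j ∈ Finset.range r, (n - j)) * (n - r).factorial = n.factorial := by
  intro r
  induction r with
  | zero => simp
  | succ r ihr =>
    intro h
    rw [Finset.prod_range_succ]
    have h1 : n - r = (n - (r + 1)) + 1 := by omega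
    have h2 : (n - r).factorial = (n - r) * (n - (r + 1)).factorial := by
      rw [h1, Nat.factorial_succ, ← h1]
    calc (∏ j ∈ Finset.range r, (n - j)) * (n - r) * (n - (r + 1)).factorial
        = (∏ j ∈ Finset.range r, (n - j)) * ((n - r) * (n - (r + 1)).factorial) := by ring
      _ = (∏ j ∈ Finset.range r, (n - j)) * (n - r).factorial := by rw [← h2]
      _ = n.factorial := ihr (by omega)

theorem hook_complement (μ : YoungDiagram) (k q : ℕ) (hk : μ.colLen 0 ≤ k)
    (hq : μ.rowLen 0 ≤ q) :
    (∏ i ∈ Finset.range k, (q + 1 + i - μ.rowLen i))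
      * (∏ j ∈ Finset.range (μ.rowLen 0), (q + μ.colLen j - j))
      * (q - μ.rowLen 0).factorial
    = (q + k).factorial := by
  classical
  set L := μ.rowLen 0 with hL
  have hrow_le : ∀ i, μ.rowLen i ≤ L := fun i => μ.rowLen_anti 0 i (Nat.zero_le i)
  have hrow_q : ∀ i, μ.rowLen i ≤ q := fun i => le_trans (hrow_le i) hq
  have hcol_le : ∀ j, μ.colLen j ≤ k := fun j =>
    le_trans (μ.colLen_anti 0 j (Nat.zero_le j)) hk
  have hdual : ∀ i j, j < μ.rowLen i ↔ i < μ.colLen j := fun i j =>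
    (mem_iff_lt_rowLen).symm.trans mem_iff_lt_colLen
  have hcolpos : ∀ j, j < L → 1 ≤ μ.colLen j := by
    intro j hj
    have := (hdual 0 j).1 (by omega)
    omega
  set g : ℕ → ℕ := fun i => q + i - μ.rowLen i with hg
  set h : ℕ → ℕ := fun j => q + μ.colLen j - (j + 1) with hh
  have hgmono : ∀ a b, a < b → g a < g b := by
    intro a b hab
    have h1 := μ.rowLen_anti a b (le_of_lt hab)
    have h2 := hrow_q a
    have h3 := hrow_q b
    simp only [hg]
    omega
  have hhmono : ∀ a b, a < b → b < L → h b < h a := by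
    intro a b hab hbL
    have h1 := μ.colLen_anti a b (le_of_lt hab)
    have h2 := hcolpos b hbL
    have h3 : a < q := by omega
    simp only [hh]
    omega
  set A := (Finset.range k).image g with hA
  set B := (Finset.range L).image h with hB
  set C := Finset.range (q - L) with hC
  have hginj : Set.InjOn g (Finset.range k : Set ℕ) := by
    intro a _ b _ heq
    rcases lt_trichotomy a b with hlt | he | hgt
    · exact absurd heq (ne_of_lt (hgmono a b hlt))
    · exact he
    · exact absurd heq (ne_of_gt (hgmono b a hgt))
  have hhinj : Set.InjOn h (Finset.range L : Set ℕ) := by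
    intro a ha b hb heq
    simp only [Finset.coe_range, Set.mem_Iio] at ha hb
    rcases lt_trichotomy a b with hlt | he | hgt
    · exact absurd heq (ne_of_gt (hhmono a b hlt hb))
    · exact he
    · exact absurd heq (ne_of_lt (hhmono b a hgt ha))
  have hcardA : A.card = k := by
    rw [hA, Finset.card_image_of_injOn hginj, Finset.card_range]
  have hcardB : B.card = L := by
    rw [hB, Finset.card_image_of_injOn hhinj, Finset.card_range]
  have hcardC : C.card = q - L := by rw [hC, Finset.card_range]
  have hdisjAB : Disjoint A B := by
    rw [Finset.disjoint_left]
    rintro x hx hx'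
    simp only [hA, hB, Finset.mem_image, Finset.mem_range] at hx hx'
    obtain ⟨i, hik, rfl⟩ := hx
    obtain ⟨j, hjL, heq⟩ := hx'
    have hq1 : μ.rowLen i ≤ q := hrow_q i
    have hq2 : j < q := by have := hq; omega
    by_cases hmem : j < μ.rowLen i
    · have h1 : i < μ.colLen j := (hdual i j).1 hmem
      simp only [hg, hh] at heq
      omega
    · have h1 : μ.colLen j ≤ i := by
        by_contra hcon
        exact hmem ((hdual i j).2 (by omega))
      simp only [hg, hh] at heq
      omega
  have hdisjAC : Disjoint A C := by
    rw [Finset.disjoint_left]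
    rintro x hx hx'
    simp only [hA, Finset.mem_image, Finset.mem_range] at hx
    simp only [hC, Finset.mem_range] at hx'
    obtain ⟨i, hik, rfl⟩ := hx
    have h1 := hrow_le i
    have h2 := hrow_q i
    simp only [hg] at hx'
    omega
  have hdisjBC : Disjoint B C := by
    rw [Finset.disjoint_left]
    rintro x hx hx'
    simp only [hB, Finset.mem_image, Finset.mem_range] at hx
    simp only [hC, Finset.mem_range] at hx'
    obtain ⟨j, hjL, rfl⟩ := hx
    have h1 := hcolpos j hjL
    have h2 : j < q := by have := hq; omega
    simp only [hh] at hx'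
    omega
  have hsub : A ∪ B ∪ C ⊆ Finset.range (q + k) := by
    intro x hx
    rw [Finset.mem_union, Finset.mem_union] at hx
    rw [Finset.mem_range]
    rcases hx with (hx | hx) | hx
    · simp only [hA, Finset.mem_image, Finset.mem_range] at hx
      obtain ⟨i, hik, rfl⟩ := hx
      have := hrow_q i
      simp only [hg]
      omega
    · simp only [hB, Finset.mem_image, Finset.mem_range] at hx
      obtain ⟨j, hjL, rfl⟩ := hx
      have h1 := hcolpos j hjL
      have h2 := hcol_le j
      have h3 : j < q := by have := hq; omega
      simp only [hh]
      omega
    · simp only [hC, Finset.mem_range] at hx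
      omega
  have hdisjU : Disjoint (A ∪ B) C := Finset.disjoint_union_left.2 ⟨hdisjAC, hdisjBC⟩
  have hcardU : (A ∪ B ∪ C).card = q + k := by
    rw [Finset.card_union_of_disjoint hdisjU, Finset.card_union_of_disjoint hdisjAB,
      hcardA, hcardB, hcardC]
    omega
  have heq : A ∪ B ∪ C = Finset.range (q + k) :=
    Finset.eq_of_subset_of_card_le hsub (by rw [hcardU, Finset.card_range])
  have hprodall : ∏ x ∈ A ∪ B ∪ C, (x + 1) = (q + k).factorial := by
    rw [heq]
    exact Finset.prod_range_add_one_eq_factorial (q + k)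
  rw [Finset.prod_union hdisjU, Finset.prod_union hdisjAB] at hprodall
  have hPA : ∏ x ∈ A, (x + 1) = ∏ i ∈ Finset.range k, (q + 1 + i - μ.rowLen i) := by
    rw [hA, Finset.prod_image hginj]
    refine Finset.prod_congr rfl fun i _ => ?_
    have := hrow_q i
    simp only [hg]
    omega
  have hPB : ∏ x ∈ B, (x + 1) = ∏ j ∈ Finset.range (μ.rowLen 0), (q + μ.colLen j - j) := by
    rw [hB, Finset.prod_image hhinj, ← hL]
    refine Finset.prod_congr rfl fun j hj => ?_
    have h1 := hcolpos j (Finset.mem_range.1 hj)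
    have h2 : j < q := by have := Finset.mem_range.1 hj; omega
    simp only [hh]
    omega
  have hPC : ∏ x ∈ C, (x + 1) = (q - L).factorial := by
    rw [hC]
    exact Finset.prod_range_add_one_eq_factorial (q - L)
  rw [hPA, hPB, hPC] at hprodall
  simp only [hL] at hprodall ⊢
  exact hprodall

end Complement

section Final

open Finset YoungDiagram

theorem colLen_eq_of_iff {ν : YoungDiagram} {j L : ℕ} (h : ∀ i, (i, j) ∈ ν ↔ i < L) :
    ν.colLen j = L := by
  rcases lt_trichotomy (ν.colLen j) L with hlt | he | hgt
  · exact absurd (mem_iff_lt_colLen.1 ((h _).2 hlt)) (lt_irrefl _)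
  · exact he
  · exact absurd ((h _).1 (mem_iff_lt_colLen.2 hgt)) (lt_irrefl _)

theorem del_succ (k : ℕ) (w : ℕ → ℚ) :
    del (k + 1) w = (∏ j ∈ Finset.range k, (w 0 - w (j + 1))) * del k (fun i => w (i + 1)) := by
  unfold del
  rw [Finset.prod_range_succ']
  rw [show (∏ i ∈ Finset.range 0, (w i - w 0)) = 1 from rfl, mul_one]
  rw [← Finset.prod_mul_distrib]
  refine Finset.prod_congr rfl fun j _ => ?_
  rw [Finset.prod_range_succ', mul_comm]

/-- for `n > |μ| + μ₁` and `ν = μ[n]` the shape obtained by appending a new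
largest part `n - |μ|` to `μ`, the number of standard Young tableaux of shape `μ[n]` satisfies
`f^{μ[n]} = (f^μ/|μ|!) · n(n-1)⋯(n-|μ|-μ₁+1) / ∏_{i=1}^{μ₁} (n - |μ| - i + 1 + μᵗᵢ)`,
stated here with all denominators cleared (`μᵗᵢ = μ.colLen (i-1)` is the conjugate part). -/
theorem stmt_1 (μ ν : YoungDiagram) (n : ℕ) (hn : μ.card + μ.rowLen 0 < n)
    (hν0 : ∀ j, (0, j) ∈ ν ↔ j < n - μ.card)
    (hν1 : ∀ i j, (i + 1, j) ∈ ν ↔ (i, j) ∈ μ) :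
    Nat.card (SYT ν) * Nat.factorial μ.card *
        ∏ i ∈ Finset.range (μ.rowLen 0), (n + 1 + μ.colLen i - μ.card - (i + 1))
      = Nat.card (SYT μ) * ∏ j ∈ Finset.range (μ.card + μ.rowLen 0), (n - j) := by
  classical
  set m := μ.card with hm
  set L := μ.rowLen 0 with hLdef
  set k := μ.colLen 0 with hkdef
  set q := n - m with hqdef
  have hqL : L < q := by omega
  have hrow_le : ∀ i, μ.rowLen i ≤ L := fun i => μ.rowLen_anti 0 i (Nat.zero_le i)
  have hrow0ν : ν.rowLen 0 = q := rowLen_eq_of_iff (fun j => hν0 j)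
  have hrowν : ∀ i, ν.rowLen (i + 1) = μ.rowLen i := fun i =>
    rowLen_eq_of_iff (fun j => (hν1 i j).trans mem_iff_lt_rowLen)
  have hcolν : ν.colLen 0 = k + 1 := by
    apply colLen_eq_of_iff
    intro i
    rcases i with _ | i
    · simp only [hν0 0]
      constructor
      · intro _; omega
      · intro _; omega
    · rw [hν1 i 0, mem_iff_lt_colLen]
      omega
  have hcardμ : m = ∑ i ∈ Finset.range k, μ.rowLen i := card_eq_sum_rowLen μ le_rfl
  have hcardν : ν.card = n := by
    rw [card_eq_sum_rowLen ν (le_of_eq hcolν), Finset.sum_range_succ']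
    have h1 : ∀ i ∈ Finset.range k, ν.rowLen (i + 1) = μ.rowLen i := fun i _ => hrowν i
    rw [Finset.sum_congr rfl h1, hrow0ν, ← hcardμ]
    omega
  -- natural number quantities
  set Ak := ∏ i ∈ Finset.range k, (q + 1 + i - μ.rowLen i) with hAk
  set Bk := ∏ i ∈ Finset.range L, (q + μ.colLen i - i) with hBk
  set Desc := ∏ j ∈ Finset.range (m + L), (n - j) with hDesc
  -- Frobenius for μ
  have E1 := frobeniusSYT m μ rfl k le_rfl
  -- Frobenius for ν
  have E2 := frobeniusSYT n ν hcardν (k + 1) (le_of_eq hcolν)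
  set Pμ := ∏ i ∈ Finset.range k, ((Nat.factorial (μ.rowLen i + (k - 1 - i))) : ℚ) with hPμ
  set Dμ := del k (fun i => (μ.rowLen i : ℚ) + (k : ℚ) - 1 - i) with hDμ
  -- massage the ν-product of factorials
  have hPν : ∏ i ∈ Finset.range (k + 1), ((Nat.factorial (ν.rowLen i + (k + 1 - 1 - i))) : ℚ)
      = ((Nat.factorial (q + k)) : ℚ) * Pμ := by
    rw [Finset.prod_range_succ']
    have h1 : ∀ i ∈ Finset.range k,
        ((Nat.factorial (ν.rowLen (i + 1) + (k + 1 - 1 - (i + 1)))) : ℚ)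
          = ((Nat.factorial (μ.rowLen i + (k - 1 - i))) : ℚ) := by
      intro i _
      rw [hrowν i]
      congr 2
      omega
    rw [Finset.prod_congr rfl h1, hrow0ν]
    rw [show q + (k + 1 - 1 - 0) = q + k from by omega]
    ring
  -- massage the ν-del
  have hDν : del (k + 1) (fun i => (ν.rowLen i : ℚ) + ((k + 1 : ℕ) : ℚ) - 1 - i)
      = ((Ak : ℕ) : ℚ) * Dμ := by
    rw [del_succ]
    congr 1
    · rw [Nat.cast_prod]
      refine Finset.prod_congr rfl fun j hj => ?_
      have hj' := Finset.mem_range.1 hj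
      have h2 : μ.rowLen j ≤ q := le_trans (hrow_le j) (le_of_lt hqL)
      rw [hrowν j, hrow0ν]
      rw [Nat.cast_sub (by omega : μ.rowLen j ≤ q + 1 + j)]
      push_cast
      ring
    · rw [hDμ]
      apply del_congr
      intro i _
      rw [hrowν i]
      push_cast
      ring
  rw [hPν, hDν] at E2
  -- cast versions of complement & descending factorial identities
  have E3 : ((Ak : ℕ) : ℚ) * ((Bk : ℕ) : ℚ) * ((Nat.factorial (q - L)) : ℚ)
      = ((Nat.factorial (q + k)) : ℚ) := by
    rw [← Nat.cast_mul, ← Nat.cast_mul, Nat.cast_inj]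
    exact hook_complement μ k q le_rfl (le_of_lt hqL)
  have E4 : ((Desc : ℕ) : ℚ) * ((Nat.factorial (q - L)) : ℚ) = ((Nat.factorial n) : ℚ) := by
    rw [← Nat.cast_mul, Nat.cast_inj]
    have h1 := descFact n (m + L) (by omega)
    rw [show n - (m + L) = q - L from by omega] at h1
    exact h1
  -- rewrite the target product
  have hBk' : ∏ i ∈ Finset.range L, (n + 1 + μ.colLen i - m - (i + 1)) = Bk := by
    rw [hBk]
    refine Finset.prod_congr rfl fun i hi => ?_
    have hi' := Finset.mem_range.1 hi
    omega
  rw [hBk']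
  -- final ℚ computation
  have hZ : (((Nat.factorial (q + k)) : ℚ) * Pμ * ((Nat.factorial (q - L)) : ℚ)) ≠ 0 := by
    refine mul_ne_zero (mul_ne_zero ?_ ?_) ?_
    · exact_mod_cast Nat.factorial_ne_zero _
    · rw [hPμ]
      refine Finset.prod_ne_zero_iff.2 fun i _ => ?_
      exact_mod_cast Nat.factorial_ne_zero _
    · exact_mod_cast Nat.factorial_ne_zero _
  have key : ((Nat.card (SYT ν) * Nat.factorial m * Bk : ℕ) : ℚ)
      = ((Nat.card (SYT μ) * Desc : ℕ) : ℚ) := by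
    push_cast
    apply mul_right_cancel₀ hZ
    linear_combination ((Nat.factorial m : ℚ) * Bk * (Nat.factorial (q - L) : ℚ)) * E2
      + ((Nat.factorial n : ℚ) * (Nat.factorial m : ℚ) * Dμ) * E3
      - ((Nat.factorial (q + k) : ℚ) * (Nat.factorial m : ℚ) * Dμ) * E4
      - ((Desc : ℚ) * (Nat.factorial (q + k) : ℚ) * (Nat.factorial (q - L) : ℚ)) * E1
  exact Nat.cast_inj.mp key

end Final
end

section
/- Suppose T[n] is a standard Young tableau formed from a semistandard tableau T with all distinct entries by adding a first row containing all numbers of {1,...,n} not in T, such that all entries of T differ pairwise by at least 2, and 2 and n are not both entries of T. Then the promotion order of T[n] divides (lcm(|T|, pr(T))/|T|)·(n−1), where pr(T) is the promotion order of the standardization of T. -/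
/-- One jeu-de-taquin step of the empty box during promotion: from the empty box at `c`,
the smaller of the entries directly to the right of and below `c` slides into `c`;
`c'` is the cell that entry occupied. -/
def SlideStep (μ : YoungDiagram) (T : SYT μ) (c c' : ℕ × ℕ) : Prop :=
  (c' = (c.1, c.2 + 1) ∨ c' = (c.1 + 1, c.2)) ∧ c' ∈ μ ∧
    ∀ c'' : ℕ × ℕ, (c'' = (c.1, c.2 + 1) ∨ c'' = (c.1 + 1, c.2)) → c'' ∈ μ →
      T.entry c'.1 c'.2 ≤ T.entry c''.1 c''.2

/-- A cell of `μ` with no cell of `μ` to its right or below it. -/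
def IsInnerCorner (μ : YoungDiagram) (c : ℕ × ℕ) : Prop :=
  c ∈ μ ∧ (c.1, c.2 + 1) ∉ μ ∧ (c.1 + 1, c.2) ∉ μ

/-- The full slide path of the empty box during promotion of `T`: it starts at the
top-left corner (where the `1` was removed), follows jeu-de-taquin slide steps, and
ends at a cell with no cells to its right or below. -/
def IsSlidePath (μ : YoungDiagram) (T : SYT μ) (p : List (ℕ × ℕ)) : Prop :=
  p.head? = some (0, 0) ∧ List.Chain' (SlideStep μ T) p ∧
    ∃ c, p.getLast? = some c ∧ IsInnerCorner μ c

/-- `S` is the promotion of `T`: remove the `1`, perform jeu-de-taquin slides into the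
empty box, decrement all entries by `1`, and place `μ.card` in the final empty box. -/
def IsPromotion (μ : YoungDiagram) (T S : SYT μ) : Prop :=
  ∃ p : List (ℕ × ℕ), IsSlidePath μ T p ∧
    (∀ c : ℕ × ℕ, c ∈ μ → c ∉ p → S.entry c.1 c.2 = T.entry c.1 c.2 - 1) ∧
    List.Chain' (fun c c' => S.entry c.1 c.2 = T.entry c'.1 c'.2 - 1) p ∧
    ∃ c, p.getLast? = some c ∧ S.entry c.1 c.2 = μ.card

/-- `IsPromIter μ k T S` says that `S` is obtained from `T` by `k` promotion steps. -/
def IsPromIter (μ : YoungDiagram) : ℕ → SYT μ → SYT μ → Prop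
  | 0, T, S => S = T
  | k + 1, T, S => ∃ U, IsPromotion μ T U ∧ IsPromIter μ k U S

/-- The order of promotion on `T`: the least `k ≥ 1` with `𝒫^k(T) = T`. -/
noncomputable def promOrder (μ : YoungDiagram) (T : SYT μ) : ℕ :=
  sInf {k | 0 < k ∧ IsPromIter μ k T T}

namespace Stmt5

variable {δ : YoungDiagram}

theorem syt_ext {A B : SYT δ} (h : A.entry = B.entry) : A = B := by
  cases A; cases B; simp_all

theorem entry_inj (A : SYT δ) {c c' : ℕ × ℕ} (hc : c ∈ δ) (hc' : c' ∈ δ)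
    (h : A.entry c.1 c.2 = A.entry c'.1 c'.2) : c = c' := by
  obtain ⟨h1, h2⟩ := A.mem_range c.1 c.2 hc
  obtain ⟨u, _, hu⟩ := A.bij (A.entry c.1 c.2) h1 h2
  have e1 := hu c ⟨hc, rfl⟩
  have e2 := hu c' ⟨hc', h.symm⟩
  rw [e1, e2]

open Classical in
/-- The cell of `δ` carrying the value `k` in `V`. -/
noncomputable def ocell (V : SYT δ) (k : ℕ) : ℕ × ℕ :=
  if h : 1 ≤ k ∧ k ≤ δ.card then (V.bij k h.1 h.2).exists.choose else (0, 0)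

theorem ocell_spec (V : SYT δ) {k : ℕ} (h1 : 1 ≤ k) (h2 : k ≤ δ.card) :
    ocell V k ∈ δ ∧ V.entry (ocell V k).1 (ocell V k).2 = k := by
  rw [ocell, dif_pos (⟨h1, h2⟩ : 1 ≤ k ∧ k ≤ δ.card)]
  exact (V.bij k h1 h2).exists.choose_spec

theorem ocell_unique (V : SYT δ) {k : ℕ} {c : ℕ × ℕ} (h1 : 1 ≤ k) (h2 : k ≤ δ.card)
    (hc : c ∈ δ) (he : V.entry c.1 c.2 = k) : c = ocell V k := by
  obtain ⟨u, hu, huu⟩ := V.bij k h1 h2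
  rw [huu c ⟨hc, he⟩, huu (ocell V k) ⟨(ocell_spec V h1 h2).1, (ocell_spec V h1 h2).2⟩]

theorem mem_of_card_pos (h : 0 < δ.card) : (0, 0) ∈ δ := by
  rw [YoungDiagram.card, Finset.card_pos] at h
  obtain ⟨c, hc⟩ := h
  exact δ.up_left_mem (Nat.zero_le _) (Nat.zero_le _) ((YoungDiagram.mem_cells c).mp hc)

theorem entry_zero_zero (A : SYT δ) (h : 0 < δ.card) : A.entry 0 0 = 1 := by
  obtain ⟨c, ⟨hc, he⟩, hu⟩ := A.bij 1 le_rfl h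
  have hc0 : c = (0, 0) := by
    rcases c with ⟨i, j⟩
    rcases Nat.eq_zero_or_pos i with hi | hi
    · rcases Nat.eq_zero_or_pos j with hj | hj
      · simp [hi, hj]
      · exfalso
        have hm : (i, j - 1) ∈ δ := δ.up_left_mem le_rfl (Nat.sub_le _ _) hc
        have := A.row_strict i (j - 1) j (by omega) hc
        have := (A.mem_range i (j - 1) hm).1
        simp at he; omega
    · exfalso
      have hm : (i - 1, j) ∈ δ := δ.up_left_mem (Nat.sub_le _ _) le_rfl hc
      have := A.col_strict (i - 1) i j (by omega) hc
      have := (A.mem_range (i - 1) j hm).1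
      simp at he; omega
  rw [hc0] at he; exact he

theorem slide_lt (A : SYT δ) {c c' : ℕ × ℕ} (h : SlideStep δ A c c') :
    A.entry c.1 c.2 < A.entry c'.1 c'.2 := by
  obtain ⟨hdir, hmem, _⟩ := h
  rcases hdir with h1 | h1
  · subst h1; exact A.row_strict c.1 c.2 (c.2 + 1) (Nat.lt_succ_self _) hmem
  · subst h1; exact A.col_strict c.1 (c.1 + 1) c.2 (Nat.lt_succ_self _) hmem

theorem slide_mem_left (A : SYT δ) {c c' : ℕ × ℕ} (h : SlideStep δ A c c') : c ∈ δ := by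
  obtain ⟨hdir, hmem, _⟩ := h
  rcases hdir with h1 | h1 <;> subst h1
  · exact δ.up_left_mem le_rfl (Nat.le_succ _) hmem
  · exact δ.up_left_mem (Nat.le_succ _) le_rfl hmem

theorem slide_unique (A : SYT δ) {c d1 d2 : ℕ × ℕ} (h1 : SlideStep δ A c d1)
    (h2 : SlideStep δ A c d2) : d1 = d2 := by
  obtain ⟨hd1, hm1, hmin1⟩ := h1
  obtain ⟨hd2, hm2, hmin2⟩ := h2
  exact entry_inj A hm1 hm2 (le_antisymm (hmin1 d2 hd2 hm2) (hmin2 d1 hd1 hm1))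

theorem not_slide_of_corner (A : SYT δ) {c d : ℕ × ℕ} (hc : IsInnerCorner δ c) :
    ¬ SlideStep δ A c d := by
  rintro ⟨hdir, hmem, -⟩
  rcases hdir with h | h <;> subst h
  · exact hc.2.1 hmem
  · exact hc.2.2 hmem

theorem path_unique_aux (A : SYT δ) : ∀ (p q : List (ℕ × ℕ)) (c : ℕ × ℕ),
    p.head? = some c → q.head? = some c →
    List.Chain' (SlideStep δ A) p → List.Chain' (SlideStep δ A) q →
    (∃ e, p.getLast? = some e ∧ IsInnerCorner δ e) →
    (∃ e, q.getLast? = some e ∧ IsInnerCorner δ e) → p = q := by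
  intro p
  induction p with
  | nil => intro q c hp; simp at hp
  | cons a p ih =>
    intro q c hp hq hcp hcq hlp hlq
    simp at hp; subst hp
    match q, hq with
    | b :: q, hq =>
      simp at hq; subst hq
      match p, q with
      | [], [] => rfl
      | [], d :: q =>
        exfalso
        obtain ⟨e, he, hcor⟩ := hlp
        simp at he; subst he
        exact not_slide_of_corner A hcor (List.isChain_cons_cons.mp hcq).1
      | d :: p, [] =>
        exfalso
        obtain ⟨e, he, hcor⟩ := hlq
        simp at he; subst he
        exact not_slide_of_corner A hcor (List.isChain_cons_cons.mp hcp).1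
      | d :: p, d' :: q =>
        have hd : d = d' := slide_unique A (List.isChain_cons_cons.mp hcp).1 (List.isChain_cons_cons.mp hcq).1
        subst hd
        have := ih (d :: q) d rfl rfl (List.isChain_cons_cons.mp hcp).2 (List.isChain_cons_cons.mp hcq).2
          (by obtain ⟨e, he, hcor⟩ := hlp; exact ⟨e, by rw [List.getLast?_cons_cons] at he; exact he, hcor⟩)
          (by obtain ⟨e, he, hcor⟩ := hlq; exact ⟨e, by rw [List.getLast?_cons_cons] at he; exact he, hcor⟩)
        rw [this]

theorem path_unique (A : SYT δ) {p q : List (ℕ × ℕ)} (hp : IsSlidePath δ A p)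
    (hq : IsSlidePath δ A q) : p = q :=
  path_unique_aux A p q (0,0) hp.1 hq.1 hp.2.1 hq.2.1 hp.2.2 hq.2.2

theorem chain2_eq (A B1 B2 : SYT δ) : ∀ (p : List (ℕ × ℕ)),
    List.Chain' (fun c c' => B1.entry c.1 c.2 = A.entry c'.1 c'.2 - 1) p →
    List.Chain' (fun c c' => B2.entry c.1 c.2 = A.entry c'.1 c'.2 - 1) p →
    ∀ c ∈ p, (∀ e, p.getLast? = some e → c ≠ e) → B1.entry c.1 c.2 = B2.entry c.1 c.2 := by
  intro p
  induction p with
  | nil => intro _ _ c hc; simp at hc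
  | cons a p ih =>
    intro h1 h2 c hc hne
    match p with
    | [] =>
      simp at hc; subst hc
      exact absurd rfl (hne c (by simp))
    | d :: p =>
      rcases List.mem_cons.mp hc with hc | hc
      · subst hc
        rw [(List.isChain_cons_cons.mp h1).1, (List.isChain_cons_cons.mp h2).1]
      · exact ih (List.isChain_cons_cons.mp h1).2 (List.isChain_cons_cons.mp h2).2 c hc
          (fun e he hce => hne e (by rw [List.getLast?_cons_cons]; exact he) hce)

theorem promotion_unique (A B1 B2 : SYT δ) (h1 : IsPromotion δ A B1)
    (h2 : IsPromotion δ A B2) : B1 = B2 := by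
  obtain ⟨p, hp, hoff1, hch1, e1, he1, hv1⟩ := h1
  obtain ⟨q, hq, hoff2, hch2, e2, he2, hv2⟩ := h2
  have hpq : p = q := path_unique A hp hq
  subst hpq
  have he : e1 = e2 := by rw [he1] at he2; exact Option.some_injective _ he2
  subst he
  apply syt_ext
  funext i j
  by_cases hm : (i, j) ∈ δ
  · by_cases hin : (i, j) ∈ p
    · by_cases hlast : (i, j) = e1
      · subst hlast; rw [hv1, hv2]
      · exact chain2_eq A B1 B2 p hch1 hch2 (i, j) hin
          (fun e he hce => hlast (by rw [he1] at he; rw [hce, Option.some_injective _ he]))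
    · rw [hoff1 (i,j) hm hin, hoff2 (i,j) hm hin]
  · rw [B1.zeros i j hm, B2.zeros i j hm]

theorem promIter_unique (A : SYT δ) : ∀ (k : ℕ) (B1 B2 : SYT δ),
    IsPromIter δ k A B1 → IsPromIter δ k A B2 → B1 = B2 := by
  intro k
  induction k generalizing A with
  | zero => intro B1 B2 h1 h2; rw [show IsPromIter δ 0 A B1 = (B1 = A) from rfl] at h1;
            rw [show IsPromIter δ 0 A B2 = (B2 = A) from rfl] at h2; rw [h1, h2]
  | succ k ih =>
    rintro B1 B2 ⟨U1, hU1, h1⟩ ⟨U2, hU2, h2⟩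
    have : U1 = U2 := promotion_unique A U1 U2 hU1 hU2
    subst this
    exact ih U1 B1 B2 h1 h2

theorem promIter_add {A B C : SYT δ} : ∀ {a b : ℕ},
    IsPromIter δ a A B → IsPromIter δ b B C → IsPromIter δ (a + b) A C := by
  intro a
  induction a generalizing A with
  | zero => intro b h1 h2; have : B = A := h1; subst this; simpa using h2
  | succ a ih =>
    rintro b ⟨U, hU, h1⟩ h2
    rw [show a + 1 + b = (a + b) + 1 by ring]
    exact ⟨U, hU, ih h1 h2⟩

theorem promIter_split {A C : SYT δ} : ∀ {a b : ℕ},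
    IsPromIter δ (a + b) A C → ∃ B, IsPromIter δ a A B ∧ IsPromIter δ b B C := by
  intro a
  induction a generalizing A with
  | zero => intro b h; exact ⟨A, rfl, by simpa using h⟩
  | succ a ih =>
    intro b h
    rw [show a + 1 + b = (a + b) + 1 by ring] at h
    obtain ⟨U, hU, h1⟩ := h
    obtain ⟨B, hB1, hB2⟩ := ih h1
    exact ⟨B, ⟨U, hU, hB1⟩, hB2⟩

theorem promIter_mul {A : SYT δ} {d : ℕ} (h : IsPromIter δ d A A) :
    ∀ q : ℕ, IsPromIter δ (q * d) A A := by
  intro q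
  induction q with
  | zero => show IsPromIter δ (0 * d) A A; rw [Nat.zero_mul]; rfl
  | succ q ih => rw [show (q + 1) * d = q * d + d by ring]; exact promIter_add ih h

theorem promOrder_dvd {A : SYT δ} {N : ℕ} (hN : 0 < N) (h : IsPromIter δ N A A) :
    promOrder δ A ∣ N := by
  have hne : {k | 0 < k ∧ IsPromIter δ k A A}.Nonempty := ⟨N, hN, h⟩
  have hmem := Nat.sInf_mem hne
  obtain ⟨hdpos, hdit⟩ := hmem
  set d := sInf {k | 0 < k ∧ IsPromIter δ k A A} with hd
  have hord : promOrder δ A = d := rfl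
  rw [hord]
  have hr : N % d = 0 := by
    by_contra hr
    have hrpos : 0 < N % d := Nat.pos_of_ne_zero hr
    have hsplit : IsPromIter δ (d * (N / d) + N % d) A A := by
      rw [Nat.div_add_mod]; exact h
    obtain ⟨B, hB1, hB2⟩ := promIter_split hsplit
    have hB1' : IsPromIter δ (d * (N / d)) A A := by
      rw [mul_comm]; exact promIter_mul hdit (N / d)
    have hBA : B = A := promIter_unique A (d * (N / d)) B A hB1 hB1'
    rw [hBA] at hB2
    have hmem2 : N % d ∈ {k | 0 < k ∧ IsPromIter δ k A A} := ⟨hrpos, hB2⟩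
    have h1 := Nat.sInf_le hmem2
    have h2 := Nat.mod_lt N hdpos
    omega
  exact Nat.dvd_of_mod_eq_zero hr


theorem row_mono (A : SYT δ) {i j1 j2 : ℕ} (h : j1 ≤ j2) (hm : (i, j2) ∈ δ) :
    A.entry i j1 ≤ A.entry i j2 := by
  rcases Nat.eq_or_lt_of_le h with h' | h'
  · rw [h']
  · exact (A.row_strict i j1 j2 h' hm).le

theorem col_mono (A : SYT δ) {i1 i2 j : ℕ} (h : i1 ≤ i2) (hm : (i2, j) ∈ δ) :
    A.entry i1 j ≤ A.entry i2 j := by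
  rcases Nat.eq_or_lt_of_le h with h' | h'
  · rw [h']
  · exact (A.col_strict i1 i2 j h' hm).le

theorem chain'_range_of {R : ℕ → ℕ → Prop} {r : ℕ}
    (h : ∀ m, m + 1 < r → R m (m + 1)) : List.Chain' R (List.range r) := by
  match r with
  | 0 => exact List.isChain_nil
  | r + 1 =>
    rw [List.Chain', List.isChain_range_succ]
    intro m hm
    exact h m (by omega)

theorem getLast?_cons_ne {α : Type*} {a : α} {l : List α} (h : l ≠ []) :
    (a :: l).getLast? = l.getLast? := by
  match l with
  | [] => simp at h
  | b :: t => rw [List.getLast?_cons_cons]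

theorem chain'_and {α : Type*} {R S : α → α → Prop} :
    ∀ {l : List α}, List.Chain' R l → List.Chain' S l →
      List.Chain' (fun a b => R a b ∧ S a b) l := by
  intro l
  induction l with
  | nil => intro _ _; exact List.isChain_nil
  | cons a l ih =>
    intro h1 h2
    rw [List.Chain', List.isChain_cons] at h1 h2 ⊢
    exact ⟨fun b hb => ⟨h1.1 b hb, h2.1 b hb⟩, ih h1.2 h2.2⟩

theorem chain'_mem_elim {α : Type*} {R : α → α → Prop} :
    ∀ (l : List α), List.Chain' R l → ∀ c ∈ l,
      l.getLast? = some c ∨ ∃ d, R c d := by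
  intro l
  induction l with
  | nil => intro _ c hc; simp at hc
  | cons a l ih =>
    intro hl c hc
    match l with
    | [] =>
      left
      simp at hc
      simp [hc]
    | b :: l =>
      rcases List.mem_cons.mp hc with hc | hc
      · subst hc
        exact Or.inr ⟨b, (List.isChain_cons_cons.mp hl).1⟩
      · rcases ih (List.isChain_cons_cons.mp hl).2 c hc with h | h
        · left; rwa [List.getLast?_cons_cons]
        · exact Or.inr h

theorem gap_card {S : Finset ℕ} {a b : ℕ} (hsub : S ⊆ Finset.Icc a b)
    (hgap : ∀ x ∈ S, ∀ y ∈ S, x ≠ y → x + 2 ≤ y ∨ y + 2 ≤ x) :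
    2 * S.card ≤ b + 2 - a := by
  have hdisj : Disjoint S (S.image (· + 1)) := by
    rw [Finset.disjoint_right]
    intro v hv hv2
    obtain ⟨w, hw, hwv⟩ := Finset.mem_image.mp hv
    rcases hgap w hw v hv2 (by omega) with h | h <;> omega
  have hsub2 : S ∪ S.image (· + 1) ⊆ Finset.Icc a (b + 1) := by
    intro v hv
    rcases Finset.mem_union.mp hv with hv | hv
    · have := hsub hv; rw [Finset.mem_Icc] at *; omega
    · obtain ⟨w, hw, hwv⟩ := Finset.mem_image.mp hv
      have := hsub hw; rw [Finset.mem_Icc] at *; omega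
  have hcard := Finset.card_le_card hsub2
  rw [Finset.card_union_of_disjoint hdisj,
    Finset.card_image_of_injective _ (add_left_injective 1), Nat.card_Icc] at hcard
  omega

structure Ctx (μ ν : YoungDiagram) (n : ℕ) : Prop where
  hμ : 0 < μ.card
  hν0 : ∀ j, (0, j) ∈ ν ↔ j < n - μ.card
  hν1 : ∀ i j, (i + 1, j) ∈ ν ↔ (i, j) ∈ μ
  hcard : ν.card = n

namespace Ctx

variable {μ ν : YoungDiagram} {n : ℕ}

theorem mem00μ (C : Ctx μ ν n) : (0, 0) ∈ μ := mem_of_card_pos C.hμ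

theorem mem10ν (C : Ctx μ ν n) : (1, 0) ∈ ν := (C.hν1 0 0).mpr C.mem00μ

theorem mem00ν (C : Ctx μ ν n) : (0, 0) ∈ ν := ν.up_left_mem (Nat.zero_le _) le_rfl C.mem10ν

theorem rpos (C : Ctx μ ν n) : 0 < n - μ.card := (C.hν0 0).mp C.mem00ν

theorem mlt (C : Ctx μ ν n) : μ.card < n := by have := C.rpos; omega

theorem npos (C : Ctx μ ν n) : 2 ≤ n := by have := C.rpos; have := C.hμ; omega

theorem nucard_pos (C : Ctx μ ν n) : 0 < ν.card := by rw [C.hcard]; have := C.npos; omega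

theorem inner_mem (C : Ctx μ ν n) {c : ℕ × ℕ} (hc : c ∈ μ) : (c.1 + 1, c.2) ∈ ν := (C.hν1 c.1 c.2).mpr hc

variable (U : SYT ν)

theorem U00 (C : Ctx μ ν n) : U.entry 0 0 = 1 := entry_zero_zero U C.nucard_pos

theorem entry_le_n (C : Ctx μ ν n) (i j : ℕ) : U.entry i j ≤ n := by
  by_cases h : (i, j) ∈ ν
  · have := (U.mem_range i j h).2; rw [C.hcard] at this; exact this
  · rw [U.zeros i j h]; omega

theorem mem_inner_iff (C : Ctx μ ν n) {i : ℕ} (j : ℕ) (hi : 1 ≤ i) :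
    ((i, j) ∈ ν ↔ (i - 1, j) ∈ μ) := by
  have := C.hν1 (i - 1) j
  rwa [Nat.sub_add_cancel hi] at this

theorem inner_ge_two (C : Ctx μ ν n) {c : ℕ × ℕ} (hc : c ∈ μ) : 2 ≤ U.entry (c.1 + 1) c.2 := by
  have hm := C.inner_mem hc
  have h1 := (U.mem_range _ _ hm).1
  rcases Nat.lt_or_ge (U.entry (c.1 + 1) c.2) 2 with h | h
  · exfalso
    have he : U.entry (c.1 + 1) c.2 = U.entry 0 0 := by rw [C.U00 U]; omega
    have := entry_inj U hm C.mem00ν he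
    simp [Prod.ext_iff] at this
  · exact h

theorem row0_ge_two (C : Ctx μ ν n) {j : ℕ} (hj : 1 ≤ j) (hm : (0, j) ∈ ν) : 2 ≤ U.entry 0 j := by
  have h1 := (U.mem_range _ _ hm).1
  rcases Nat.lt_or_ge (U.entry 0 j) 2 with h | h
  · exfalso
    have he : U.entry 0 j = U.entry 0 0 := by rw [C.U00 U]; omega
    have := entry_inj U hm C.mem00ν he
    simp [Prod.ext_iff] at this
    omega
  · exact h

end Ctx

/-- The set of values of the inner part of `U`. -/
def innerSet (μ : YoungDiagram) {ν : YoungDiagram} (U : SYT ν) : Finset ℕ :=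
  μ.cells.image (fun c => U.entry (c.1 + 1) c.2)

theorem mem_innerSet {μ ν : YoungDiagram} {U : SYT ν} {v : ℕ} :
    v ∈ innerSet μ U ↔ ∃ c : ℕ × ℕ, c ∈ μ ∧ U.entry (c.1 + 1) c.2 = v := by
  simp [innerSet, YoungDiagram.mem_cells]

theorem innerSet_card {μ ν : YoungDiagram} {n : ℕ} (C : Ctx μ ν n) (U : SYT ν) :
    (innerSet μ U).card = μ.card := by
  rw [innerSet, YoungDiagram.card]
  apply Finset.card_image_of_injOn
  intro c hc c' hc' he
  simp only at he
  have h := entry_inj U (C.inner_mem ((YoungDiagram.mem_cells _).mp hc))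
    (C.inner_mem ((YoungDiagram.mem_cells _).mp hc')) he
  rw [Prod.ext_iff] at h ⊢
  simp at h
  omega

theorem innerSet_sub {μ ν : YoungDiagram} {n : ℕ} (C : Ctx μ ν n) (U : SYT ν) :
    innerSet μ U ⊆ Finset.Icc 2 n := by
  intro v hv
  obtain ⟨c, hc, he⟩ := mem_innerSet.mp hv
  rw [Finset.mem_Icc, ← he]
  exact ⟨C.inner_ge_two U hc, C.entry_le_n U _ _⟩


/-- The key invariant: the inner part of `U` is ordered like `V`, has pairwise gaps at
least `2`, and does not contain both `2` and `n`. -/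
def Inv (μ ν : YoungDiagram) (n : ℕ) (U : SYT ν) (V : SYT μ) : Prop :=
  (∀ c c' : ℕ × ℕ, c ∈ μ → c' ∈ μ →
    (V.entry c.1 c.2 < V.entry c'.1 c'.2 ↔ U.entry (c.1 + 1) c.2 < U.entry (c'.1 + 1) c'.2)) ∧
  (∀ c c' : ℕ × ℕ, c ∈ μ → c' ∈ μ → c ≠ c' →
    U.entry (c.1 + 1) c.2 + 2 ≤ U.entry (c'.1 + 1) c'.2 ∨
    U.entry (c'.1 + 1) c'.2 + 2 ≤ U.entry (c.1 + 1) c.2) ∧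
  ¬((∃ c : ℕ × ℕ, c ∈ μ ∧ U.entry (c.1 + 1) c.2 = 2) ∧
    (∃ c : ℕ × ℕ, c ∈ μ ∧ U.entry (c.1 + 1) c.2 = n))

section NoDescent

variable {μ ν : YoungDiagram} {n : ℕ}

theorem innerSet_gap (C : Ctx μ ν n) (U : SYT ν)
    (hgapU : ∀ c c' : ℕ × ℕ, c ∈ μ → c' ∈ μ → c ≠ c' →
      U.entry (c.1 + 1) c.2 + 2 ≤ U.entry (c'.1 + 1) c'.2 ∨
      U.entry (c'.1 + 1) c'.2 + 2 ≤ U.entry (c.1 + 1) c.2) :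
    ∀ x ∈ innerSet μ U, ∀ y ∈ innerSet μ U, x ≠ y → x + 2 ≤ y ∨ y + 2 ≤ x := by
  intro x hx y hy hxy
  obtain ⟨c, hc, hce⟩ := mem_innerSet.mp hx
  obtain ⟨c', hc', hce'⟩ := mem_innerSet.mp hy
  have hne : c ≠ c' := fun h => hxy (by rw [← hce, ← hce', h])
  rcases hgapU c c' hc hc' hne with h | h <;> [left; right] <;> omega

theorem rowlen (C : Ctx μ ν n) (U : SYT ν)
    (hgapU : ∀ c c' : ℕ × ℕ, c ∈ μ → c' ∈ μ → c ≠ c' →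
      U.entry (c.1 + 1) c.2 + 2 ≤ U.entry (c'.1 + 1) c'.2 ∨
      U.entry (c'.1 + 1) c'.2 + 2 ≤ U.entry (c.1 + 1) c.2)
    (h2 : ∀ c : ℕ × ℕ, c ∈ μ → U.entry (c.1 + 1) c.2 ≠ 2)
    {j : ℕ} (hj : (0, j) ∈ μ) : j + 1 < n - μ.card := by
  have hS3 : innerSet μ U ⊆ Finset.Icc 3 n := by
    intro v hv
    have h1 := innerSet_sub C U hv
    obtain ⟨c, hc, hce⟩ := mem_innerSet.mp hv
    have := h2 c hc
    rw [Finset.mem_Icc] at *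
    omega
  have h1 : 2 * μ.card ≤ n - 1 := by
    have := gap_card hS3 (innerSet_gap C U hgapU)
    rw [innerSet_card C U] at this
    omega
  have h2' : j + 1 ≤ μ.card := by
    have hsub : (Finset.range (j + 1)).image (fun i => ((0 : ℕ), i)) ⊆ μ.cells := by
      intro c hc
      obtain ⟨i, hi, hie⟩ := Finset.mem_image.mp hc
      rw [YoungDiagram.mem_cells, ← hie]
      exact μ.up_left_mem le_rfl (by simpa using Nat.lt_succ_iff.mp (Finset.mem_range.mp hi)) hj
    have := Finset.card_le_card hsub
    rwa [Finset.card_image_of_injective _ (fun a b h => by simpa using h),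
      Finset.card_range, ← YoungDiagram.card] at this
  omega

theorem nodesc (C : Ctx μ ν n) (U : SYT ν)
    (hgapU : ∀ c c' : ℕ × ℕ, c ∈ μ → c' ∈ μ → c ≠ c' →
      U.entry (c.1 + 1) c.2 + 2 ≤ U.entry (c'.1 + 1) c'.2 ∨
      U.entry (c'.1 + 1) c'.2 + 2 ≤ U.entry (c.1 + 1) c.2)
    (h2 : ∀ c : ℕ × ℕ, c ∈ μ → U.entry (c.1 + 1) c.2 ≠ 2)
    {j : ℕ} (hj : (0, j) ∈ μ) :
    (0, j + 1) ∈ ν ∧ U.entry 0 (j + 1) < U.entry 1 j := by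
  have hm1 : (1, j) ∈ ν := (C.hν1 0 j).mpr hj
  have hmem : (0, j + 1) ∈ ν := (C.hν0 _).mpr (rowlen C U hgapU h2 hj)
  refine ⟨hmem, ?_⟩
  by_contra hle
  push_neg at hle
  have hne : U.entry 1 j ≠ U.entry 0 (j + 1) := by
    intro h
    have := entry_inj U hm1 hmem h
    simp [Prod.ext_iff] at this
  have hlt : U.entry 1 j < U.entry 0 (j + 1) := lt_of_le_of_ne hle hne
  set t := U.entry 1 j with ht
  set A1 := (Finset.range (j + 1)).image (fun i => U.entry 0 i) with hA1
  set B := (innerSet μ U).filter (· ≤ t) with hB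
  have hrow0mem : ∀ i, i ≤ j → (0, i) ∈ ν := fun i hi => ν.up_left_mem (by omega) hi hm1
  have hAsub : ∀ v ∈ A1, 1 ≤ v ∧ v ≤ t := by
    intro v hv
    obtain ⟨i, hi, hie⟩ := Finset.mem_image.mp hv
    rw [Finset.mem_range, Nat.lt_succ_iff] at hi
    have h1 := (U.mem_range 0 i (hrow0mem i hi)).1
    have h3 : U.entry 0 i ≤ U.entry 0 j := row_mono U hi (hrow0mem j le_rfl)
    have h4 : U.entry 0 j < U.entry 1 j := U.col_strict 0 1 j Nat.zero_lt_one hm1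
    omega
  have hBsub : ∀ v ∈ B, 2 ≤ v ∧ v ≤ t := by
    intro v hv
    rw [hB, Finset.mem_filter] at hv
    have := innerSet_sub C U hv.1
    rw [Finset.mem_Icc] at this
    exact ⟨this.1, by simpa using hv.2⟩
  have hK1 : Finset.Icc 1 t = A1 ∪ B := by
    apply Finset.Subset.antisymm
    · intro v hv
      rw [Finset.mem_Icc] at hv
      have hvn : v ≤ ν.card := by
        rw [C.hcard]
        exact le_trans hv.2 (C.entry_le_n U 1 j)
      obtain ⟨c, ⟨hcν, hce⟩, -⟩ := U.bij v hv.1 hvn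
      rcases c with ⟨ci, cj⟩
      simp only at hce
      rcases Nat.eq_zero_or_pos ci with h0 | h0
      · subst h0
        apply Finset.mem_union_left
        rw [hA1, Finset.mem_image]
        refine ⟨cj, Finset.mem_range.mpr ?_, hce⟩
        rw [Nat.lt_succ_iff]
        by_contra hcj
        push_neg at hcj
        have : U.entry 0 (j + 1) ≤ U.entry 0 cj := row_mono U hcj hcν
        omega
      · apply Finset.mem_union_right
        rw [hB, Finset.mem_filter]
        constructor
        · refine mem_innerSet.mpr ⟨(ci - 1, cj), ?_, ?_⟩
          · apply (C.hν1 (ci - 1) cj).mp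
            simpa [Nat.sub_add_cancel h0] using hcν
          · simpa [Nat.sub_add_cancel h0] using hce
        · omega
    · intro v hv
      rcases Finset.mem_union.mp hv with hv | hv
      · have := hAsub v hv; rw [Finset.mem_Icc]; omega
      · have := hBsub v hv; rw [Finset.mem_Icc]; omega
  have hdisj : Disjoint A1 B := by
    rw [Finset.disjoint_left]
    intro v hvA hvB
    obtain ⟨i, hi, hie⟩ := Finset.mem_image.mp hvA
    rw [Finset.mem_range, Nat.lt_succ_iff] at hi
    rw [hB, Finset.mem_filter] at hvB
    obtain ⟨c, hc, hce⟩ := mem_innerSet.mp hvB.1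
    have : (0, i) = (c.1 + 1, c.2) :=
      entry_inj U (hrow0mem i hi) (C.inner_mem hc) (by rw [hie, hce])
    simp [Prod.ext_iff] at this
  have hA1card : A1.card = j + 1 := by
    rw [hA1, Finset.card_image_of_injOn, Finset.card_range]
    intro i hi i' hi' he
    rw [Finset.mem_coe, Finset.mem_range, Nat.lt_succ_iff] at hi hi'
    have := entry_inj U (hrow0mem i hi) (hrow0mem i' hi') he
    simpa [Prod.ext_iff] using this
  have hcards : t = (j + 1) + B.card := by
    have hc := congrArg Finset.card hK1
    rw [Nat.card_Icc, Finset.card_union_of_disjoint hdisj, hA1card] at hc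
    omega
  set C2 := (Finset.range (j + 1)).image (fun i => U.entry 1 i) with hC2
  have hμmem : ∀ i, i ≤ j → (0, i) ∈ μ := fun i hi => μ.up_left_mem le_rfl hi hj
  have hC2sub : C2 ⊆ B := by
    intro v hv
    obtain ⟨i, hi, hie⟩ := Finset.mem_image.mp hv
    rw [Finset.mem_range, Nat.lt_succ_iff] at hi
    rw [hB, Finset.mem_filter]
    constructor
    · exact mem_innerSet.mpr ⟨(0, i), hμmem i hi, hie⟩
    · rw [← hie, ht]
      exact row_mono U hi hm1
  have hC2card : C2.card = j + 1 := by
    rw [hC2, Finset.card_image_of_injOn, Finset.card_range]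
    intro i hi i' hi' he
    rw [Finset.mem_coe, Finset.mem_range, Nat.lt_succ_iff] at hi hi'
    have := entry_inj U ((C.hν1 0 i).mpr (hμmem i hi)) ((C.hν1 0 i').mpr (hμmem i' hi')) he
    simpa [Prod.ext_iff] using this
  have hle1 : j + 1 ≤ B.card := hC2card ▸ Finset.card_le_card hC2sub
  have hB3 : B ⊆ Finset.Icc 3 t := by
    intro v hv
    have h1 := hBsub v hv
    rw [hB, Finset.mem_filter] at hv
    obtain ⟨c, hc, hce⟩ := mem_innerSet.mp hv.1
    have := h2 c hc
    rw [Finset.mem_Icc]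
    omega
  have hBgap : ∀ x ∈ B, ∀ y ∈ B, x ≠ y → x + 2 ≤ y ∨ y + 2 ≤ x := by
    intro x hx y hy hxy
    rw [hB, Finset.mem_filter] at hx hy
    exact innerSet_gap C U hgapU x hx.1 y hy.1 hxy
  have := gap_card hB3 hBgap
  omega

end NoDescent


/-- The cyclic shift of inner values: `2 ↦ n`, other values decrease by `1`. -/
def rot1 (n v : ℕ) : ℕ := if v = 2 then n else v - 1

open Classical in
/-- The entries of the promotion of `U` in the case where `2` is not an inner entry. -/
noncomputable def stepAEntry (μ ν : YoungDiagram) (n : ℕ) (U : SYT ν) : ℕ → ℕ → ℕ :=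
  fun i j =>
    if (i, j) ∈ ν then
      (if i = 0 then (if j + 1 = n - μ.card then n else U.entry 0 (j + 1) - 1)
       else U.entry i j - 1)
    else 0

section StepA

variable {μ ν : YoungDiagram} {n : ℕ}

theorem stepA (C : Ctx μ ν n) (U : SYT ν) (V : SYT μ) (hInv : Inv μ ν n U V)
    (h2 : ∀ c : ℕ × ℕ, c ∈ μ → U.entry (c.1 + 1) c.2 ≠ 2) :
    ∃ U' : SYT ν, IsPromotion ν U U' ∧ Inv μ ν n U' V ∧
      innerSet μ U' = (innerSet μ U).image (rot1 n) := by
  classical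
  obtain ⟨horder, hgapU, hno2n⟩ := hInv
  set r := n - μ.card with hrdef
  have hrpos : 0 < r := C.rpos
  have hr2 : 2 ≤ r := by have := rowlen C U hgapU h2 C.mem00μ; omega
  have hnd := fun {j} (hj : (0, j) ∈ μ) => nodesc C U hgapU h2 hj
  have hrow0ν : ∀ j, j < r → (0, j) ∈ ν := fun j hj => (C.hν0 j).mpr hj
  have hnpos : 2 ≤ n := C.npos
  set f := stepAEntry μ ν n U with hfdef
  have hf0 : ∀ j, j + 1 < r → f 0 j = U.entry 0 (j + 1) - 1 := by
    intro j hj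
    rw [hfdef, stepAEntry, if_pos (hrow0ν j (by omega)), if_pos rfl, if_neg (by omega)]
  have hflast : f 0 (r - 1) = n := by
    rw [hfdef, stepAEntry, if_pos (hrow0ν (r - 1) (by omega)), if_pos rfl,
      if_pos (by omega)]
  have hfinner : ∀ i j, i ≠ 0 → f i j = U.entry i j - 1 := by
    intro i j hi
    by_cases hm : (i, j) ∈ ν
    · rw [hfdef, stepAEntry, if_pos hm, if_neg hi]
    · rw [hfdef, stepAEntry, if_neg hm, U.zeros i j hm]
  have hfinner' : ∀ c : ℕ × ℕ, f (c.1 + 1) c.2 = U.entry (c.1 + 1) c.2 - 1 :=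
    fun c => hfinner (c.1 + 1) c.2 (by omega)
  -- the new tableau
  have hrs : ∀ i j1 j2, j1 < j2 → (i, j2) ∈ ν → f i j1 < f i j2 := by
    intro i j1 j2 hj hm2
    by_cases hi : i = 0
    · subst hi
      have hj2r : j2 < r := (C.hν0 j2).mp hm2
      by_cases hl : j2 + 1 = r
      · rw [show j2 = r - 1 by omega, hflast, hf0 j1 (by omega)]
        have := C.entry_le_n U 0 (j1 + 1)
        omega
      · rw [hf0 j1 (by omega), hf0 j2 (by omega)]
        have h1 := U.row_strict 0 (j1 + 1) (j2 + 1) (by omega) (hrow0ν _ (by omega))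
        have h2 := (U.mem_range 0 (j1 + 1) (hrow0ν _ (by omega))).1
        omega
    · rw [hfinner i j1 hi, hfinner i j2 hi]
      have h1 := U.row_strict i j1 j2 hj hm2
      have h2 := (U.mem_range i j1 (ν.up_left_mem le_rfl (by omega) hm2)).1
      omega
  have hcs : ∀ i1 i2 j, i1 < i2 → (i2, j) ∈ ν → f i1 j < f i2 j := by
    intro i1 i2 j h hm2
    have hi2 : i2 ≠ 0 := by omega
    rw [hfinner i2 j hi2]
    by_cases hi1 : i1 = 0
    · subst hi1
      have hm1 : (1, j) ∈ ν := ν.up_left_mem (by omega) le_rfl hm2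
      have hμj : (0, j) ∈ μ := (C.hν1 0 j).mp hm1
      obtain ⟨hmj1, hndj⟩ := hnd hμj
      rw [hf0 j (by have := (C.hν0 (j + 1)).mp hmj1; omega)]
      have h2j : U.entry 1 j ≤ U.entry i2 j := col_mono U (by omega) hm2
      have h3 := (U.mem_range 0 (j + 1) hmj1).1
      omega
    · rw [hfinner i1 j hi1]
      have h1 := U.col_strict i1 i2 j h hm2
      have h2 := (U.mem_range i1 j (ν.up_left_mem (by omega) le_rfl hm2)).1
      omega
  have hz : ∀ i j, (i, j) ∉ ν → f i j = 0 := by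
    intro i j hm
    rw [hfdef, stepAEntry, if_neg hm]
  have hmr : ∀ i j, (i, j) ∈ ν → 1 ≤ f i j ∧ f i j ≤ ν.card := by
    intro i j hm
    rw [C.hcard]
    by_cases hi : i = 0
    · subst hi
      have hjr : j < r := (C.hν0 j).mp hm
      by_cases hl : j + 1 = r
      · rw [show j = r - 1 by omega, hflast]; omega
      · rw [hf0 j (by omega)]
        have h1 := C.row0_ge_two U (j := j + 1) (by omega) (hrow0ν _ (by omega))
        have h2 := C.entry_le_n U 0 (j + 1)
        omega
    · rw [hfinner i j hi]
      have hμm : (i - 1, j) ∈ μ :=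
        (C.hν1 (i - 1) j).mp (by rwa [Nat.sub_add_cancel (by omega : 1 ≤ i)])
      have h1 := C.inner_ge_two U hμm
      simp only at h1
      rw [Nat.sub_add_cancel (by omega : 1 ≤ i)] at h1
      have h2 := C.entry_le_n U i j
      omega
  have hbij : ∀ v, 1 ≤ v → v ≤ ν.card → ∃! c : ℕ × ℕ, c ∈ ν ∧ f c.1 c.2 = v := by
    intro v hv1 hv2
    rw [C.hcard] at hv2
    by_cases hvn : v = n
    · subst hvn
      refine ⟨(0, r - 1), ⟨hrow0ν _ (by omega), hflast⟩, ?_⟩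
      rintro ⟨di, dj⟩ ⟨hdm, hde⟩
      simp only at hde
      by_cases hdi : di = 0
      · subst hdi
        have hdjr : dj < r := (C.hν0 dj).mp hdm
        by_cases hdl : dj + 1 = r
        · simp [Prod.ext_iff]; omega
        · rw [hf0 dj (by omega)] at hde
          have := C.entry_le_n U 0 (dj + 1)
          omega
      · rw [hfinner di dj hdi] at hde
        have := C.entry_le_n U di dj
        omega
    · obtain ⟨⟨ci, cj⟩, ⟨hcm, hce⟩, hcu⟩ := U.bij (v + 1) (by omega) (by rw [C.hcard]; omega)
      simp only at hce
      by_cases hci : ci = 0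
      · subst hci
        have hcjr : cj < r := (C.hν0 cj).mp hcm
        have hcj0 : cj ≠ 0 := by
          intro h
          rw [h, C.U00 U] at hce
          omega
        refine ⟨(0, cj - 1), ⟨hrow0ν _ (by omega), ?_⟩, ?_⟩
        · rw [hf0 (cj - 1) (by omega), Nat.sub_add_cancel (by omega), hce]
          omega
        · rintro ⟨di, dj⟩ ⟨hdm, hde⟩
          simp only at hde
          by_cases hdi : di = 0
          · subst hdi
            have hdjr : dj < r := (C.hν0 dj).mp hdm
            by_cases hdl : dj + 1 = r
            · rw [show dj = r - 1 by omega, hflast] at hde; omega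
            · rw [hf0 dj (by omega)] at hde
              have h1 := (U.mem_range 0 (dj + 1) (hrow0ν _ (by omega))).1
              have : ((0 : ℕ), dj + 1) = ((0 : ℕ), cj) :=
                hcu (0, dj + 1) ⟨hrow0ν _ (by omega), by simp; omega⟩
              simp [Prod.ext_iff] at this ⊢
              omega
          · rw [hfinner di dj hdi] at hde
            have h1 := (U.mem_range di dj hdm).1
            have : ((di : ℕ), dj) = ((0 : ℕ), cj) := hcu (di, dj) ⟨hdm, by simp; omega⟩
            simp [Prod.ext_iff] at this
            omega
      · refine ⟨(ci, cj), ⟨hcm, ?_⟩, ?_⟩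
        · rw [hfinner ci cj hci, hce]
          omega
        · rintro ⟨di, dj⟩ ⟨hdm, hde⟩
          simp only at hde
          by_cases hdi : di = 0
          · subst hdi
            have hdjr : dj < r := (C.hν0 dj).mp hdm
            by_cases hdl : dj + 1 = r
            · rw [show dj = r - 1 by omega, hflast] at hde; omega
            · rw [hf0 dj (by omega)] at hde
              have h1 := (U.mem_range 0 (dj + 1) (hrow0ν _ (by omega))).1
              have : ((0 : ℕ), dj + 1) = ((ci : ℕ), cj) :=
                hcu (0, dj + 1) ⟨hrow0ν _ (by omega), by simp; omega⟩
              simp [Prod.ext_iff] at this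
              omega
          · rw [hfinner di dj hdi] at hde
            have h1 := (U.mem_range di dj hdm).1
            exact hcu (di, dj) ⟨hdm, by simp; omega⟩
  refine ⟨⟨f, hrs, hcs, hz, hmr, hbij⟩, ?_, ?_, ?_⟩
  · -- IsPromotion
    set p : List (ℕ × ℕ) := (List.range r).map (fun j => ((0 : ℕ), j)) with hp
    have hplast : p.getLast? = some (0, r - 1) := by
      rw [hp, show r = (r - 1) + 1 by omega, List.range_succ, List.map_append]
      exact List.getLast?_concat
    have hpmem : ∀ ci cj : ℕ, ((ci, cj) ∈ p ↔ ci = 0 ∧ cj < r) := by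
      intro ci cj
      rw [hp, List.mem_map]
      constructor
      · rintro ⟨a, ha, hae⟩
        rw [List.mem_range] at ha
        have h1 := Prod.ext_iff.mp hae
        simp at h1
        omega
      · rintro ⟨h1, h2⟩
        exact ⟨cj, List.mem_range.mpr h2, by rw [h1]⟩
    refine ⟨p, ⟨?_, ?_, ⟨(0, r - 1), hplast, ?_, ?_, ?_⟩⟩, ?_, ?_, ⟨(0, r - 1), hplast, ?_⟩⟩
    · -- head
      rw [hp, show r = (r - 1) + 1 by omega, List.range_succ_eq_map]
      simp
    · -- chain of slide steps
      rw [hp, List.Chain', List.isChain_map]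
      apply chain'_range_of
      intro m hm
      refine ⟨Or.inl rfl, hrow0ν (m + 1) (by omega), ?_⟩
      rintro c'' (rfl | rfl) hc''m
      · exact le_rfl
      · simp only
        have hμm : (0, m) ∈ μ := (C.hν1 0 m).mp hc''m
        exact (hnd hμm).2.le
    · exact hrow0ν _ (by omega)
    · intro h
      have := (C.hν0 (r - 1 + 1)).mp h
      omega
    · intro h
      have hμm : (0, r - 1) ∈ μ := (C.hν1 0 (r - 1)).mp h
      have := rowlen C U hgapU h2 hμm
      omega
    · -- off-path
      rintro ⟨ci, cj⟩ hm hnp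
      show f ci cj = U.entry ci cj - 1
      by_cases hci : ci = 0
      · exfalso
        subst hci
        exact hnp ((hpmem 0 cj).mpr ⟨rfl, (C.hν0 cj).mp hm⟩)
      · exact hfinner ci cj hci
    · -- chain 2
      rw [hp, List.Chain', List.isChain_map]
      apply chain'_range_of
      intro m hm
      show f 0 m = U.entry 0 (m + 1) - 1
      exact hf0 m (by omega)
    · show f 0 (r - 1) = ν.card
      rw [hflast, C.hcard]
  · -- Inv
    refine ⟨?_, ?_, ?_⟩
    · intro c c' hc hc'
      show V.entry c.1 c.2 < V.entry c'.1 c'.2 ↔ f (c.1 + 1) c.2 < f (c'.1 + 1) c'.2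
      rw [hfinner' c, hfinner' c']
      have h1 := C.inner_ge_two U hc
      have h2 := C.inner_ge_two U hc'
      rw [horder c c' hc hc']
      omega
    · intro c c' hc hc' hne
      show f (c.1 + 1) c.2 + 2 ≤ f (c'.1 + 1) c'.2 ∨ f (c'.1 + 1) c'.2 + 2 ≤ f (c.1 + 1) c.2
      rw [hfinner' c, hfinner' c']
      have h1 := C.inner_ge_two U hc
      have h2 := C.inner_ge_two U hc'
      rcases hgapU c c' hc hc' hne with h | h <;> omega
    · rintro ⟨-, ⟨c, hc, hce⟩⟩
      have hce' : f (c.1 + 1) c.2 = n := hce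
      rw [hfinner' c] at hce'
      have := C.entry_le_n U (c.1 + 1) c.2
      omega
  · -- innerSet
    ext v
    rw [mem_innerSet, Finset.mem_image]
    constructor
    · rintro ⟨c, hc, hce⟩
      have hce' : f (c.1 + 1) c.2 = v := hce
      rw [hfinner' c] at hce'
      refine ⟨U.entry (c.1 + 1) c.2, mem_innerSet.mpr ⟨c, hc, rfl⟩, ?_⟩
      rw [rot1, if_neg (h2 c hc)]
      exact hce'
    · rintro ⟨w, hw, hwv⟩
      obtain ⟨c, hc, hce⟩ := mem_innerSet.mp hw
      refine ⟨c, hc, ?_⟩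
      show f (c.1 + 1) c.2 = v
      rw [hfinner' c, hce]
      rw [rot1, if_neg (by rw [← hce]; exact h2 c hc)] at hwv
      exact hwv

end StepA


section StepB

variable {μ ν : YoungDiagram} {n : ℕ}

theorem stepB (C : Ctx μ ν n) (U : SYT ν) (V W : SYT μ) (hInv : Inv μ ν n U V)
    (h2 : ∃ c : ℕ × ℕ, c ∈ μ ∧ U.entry (c.1 + 1) c.2 = 2)
    (hVW : IsPromotion μ V W) :
    ∃ U' : SYT ν, IsPromotion ν U U' ∧ Inv μ ν n U' W ∧
      innerSet μ U' = (innerSet μ U).image (rot1 n) := by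
  classical
  obtain ⟨horder, hgapU, hno2n⟩ := hInv
  have hm1 : 1 ≤ μ.card := C.hμ
  have hnpos : 2 ≤ n := C.npos
  have hnoN : ∀ c : ℕ × ℕ, c ∈ μ → U.entry (c.1 + 1) c.2 ≠ n :=
    fun c hc he => hno2n ⟨h2, ⟨c, hc, he⟩⟩
  obtain ⟨c2, hc2, hc2e⟩ := h2
  have hc200 : c2 = (0, 0) := by
    rcases c2 with ⟨i, j⟩
    simp only at hc2e
    rcases Nat.eq_zero_or_pos i with hi | hi
    · rcases Nat.eq_zero_or_pos j with hj | hj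
      · simp [hi, hj]
      · exfalso
        have hmem : (i, j - 1) ∈ μ := μ.up_left_mem le_rfl (by omega) hc2
        have h1 := C.inner_ge_two U hmem
        have h3 := U.row_strict (i + 1) (j - 1) j (by omega) (C.inner_mem hc2)
        simp only at h1 h3
        omega
    · exfalso
      have hmem : (i - 1, j) ∈ μ := μ.up_left_mem (by omega) le_rfl hc2
      have h1 := C.inner_ge_two U hmem
      have h3 := U.col_strict i (i + 1) j (by omega) (C.inner_mem hc2)
      simp only at h1 h3
      rw [Nat.sub_add_cancel (by omega)] at h1
      omega
  subst hc200
  have hU10 : U.entry 1 0 = 2 := hc2e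
  have hV00 : V.entry 0 0 = 1 := entry_zero_zero V C.hμ
  have hn2 : n ≠ 2 := by
    have := hnoN (0, 0) C.mem00μ
    simp only at this
    rw [show (0 : ℕ) + 1 = 1 from rfl, hU10] at this
    omega
  have horder' : ∀ c c' : ℕ × ℕ, c ∈ μ → c' ∈ μ →
      (V.entry c.1 c.2 ≤ V.entry c'.1 c'.2 ↔
        U.entry (c.1 + 1) c.2 ≤ U.entry (c'.1 + 1) c'.2) := by
    intro c c' hc hc'
    rw [← not_lt, ← not_lt, horder c' c hc' hc]
  have hival_mono : ∀ k k', 1 ≤ k → k < k' → k' ≤ μ.card →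
      U.entry ((ocell V k).1 + 1) (ocell V k).2 < U.entry ((ocell V k').1 + 1) (ocell V k').2 := by
    intro k k' h1 h2' h3
    have s1 := ocell_spec V h1 (by omega)
    have s2 := ocell_spec V (by omega : 1 ≤ k') h3
    exact (horder (ocell V k) (ocell V k') s1.1 s2.1).mp (by rw [s1.2, s2.2]; omega)
  have hoc1 : ocell V 1 = (0, 0) := (ocell_unique V le_rfl hm1 C.mem00μ hV00).symm
  have hival1 : U.entry ((ocell V 1).1 + 1) (ocell V 1).2 = 2 := by
    rw [hoc1]
    exact hU10
  have hival_ge3 : ∀ k, 2 ≤ k → k ≤ μ.card →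
      3 ≤ U.entry ((ocell V k).1 + 1) (ocell V k).2 := by
    intro k h1 h2'
    have := hival_mono 1 k le_rfl (by omega) h2'
    omega
  have hival_le : ∀ k, 1 ≤ k → k ≤ μ.card →
      U.entry ((ocell V k).1 + 1) (ocell V k).2 ≤ n - 1 := by
    intro k h1 h2'
    have s1 := ocell_spec V h1 h2'
    have hle := C.entry_le_n U ((ocell V k).1 + 1) (ocell V k).2
    have hne := hnoN (ocell V k) s1.1
    omega
  set g : ℕ → ℕ := fun k => if k = μ.card then n
    else U.entry ((ocell V (k + 1)).1 + 1) (ocell V (k + 1)).2 - 1 with hgdef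
  have hgm : g μ.card = n := by rw [hgdef]; simp
  have hgval : ∀ k, k ≠ μ.card →
      g k = U.entry ((ocell V (k + 1)).1 + 1) (ocell V (k + 1)).2 - 1 := by
    intro k hk
    rw [hgdef]
    simp only [if_neg hk]
  have hg_ge2 : ∀ k, 1 ≤ k → k ≤ μ.card → 2 ≤ g k := by
    intro k h1 h2'
    by_cases hk : k = μ.card
    · rw [hk, hgm]; omega
    · rw [hgval k hk]
      have := hival_ge3 (k + 1) (by omega) (by omega)
      omega
  have hg_le : ∀ k, 1 ≤ k → k ≤ μ.card → g k ≤ n := by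
    intro k h1 h2'
    by_cases hk : k = μ.card
    · rw [hk, hgm]
    · rw [hgval k hk]
      have := hival_le (k + 1) (by omega) (by omega)
      omega
  have hg_gap : ∀ k k', 1 ≤ k → k < k' → k' ≤ μ.card → g k + 2 ≤ g k' := by
    intro k k' h1 h2' h3
    have hk : k ≠ μ.card := by omega
    rw [hgval k hk]
    by_cases hk' : k' = μ.card
    · rw [hk', hgm]
      have := hival_le (k + 1) (by omega) (by omega)
      omega
    · rw [hgval k' hk']
      obtain ⟨hs1m, hs1e⟩ := ocell_spec V (by omega : 1 ≤ k + 1) (by omega : k + 1 ≤ μ.card)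
      obtain ⟨hs2m, hs2e⟩ := ocell_spec V (by omega : 1 ≤ k' + 1) (by omega : k' + 1 ≤ μ.card)
      have hne : ocell V (k + 1) ≠ ocell V (k' + 1) := by
        intro h
        rw [h, hs2e] at hs1e
        omega
      have hmono := hival_mono (k + 1) (k' + 1) (by omega) (by omega) (by omega)
      have hb := hival_ge3 (k + 1) (by omega) (by omega)
      rcases hgapU (ocell V (k + 1)) (ocell V (k' + 1)) hs1m hs2m hne with h | h <;> omega
  have hg_mono : ∀ k k', 1 ≤ k → k < k' → k' ≤ μ.card → g k < g k' := by
    intro k k' h1 h2' h3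
    have := hg_gap k k' h1 h2' h3
    omega
  -- unpack the promotion of V
  obtain ⟨q, ⟨hqhead, hqchain, ⟨clast, hqlast, hcorner⟩⟩, hoffV, hchain2V, ⟨clast2, hqlast2, hWlast⟩⟩ := hVW
  obtain ⟨qh, qt, rfl⟩ : ∃ qh qt, q = qh :: qt := by
    cases q with
    | nil => simp at hqhead
    | cons a t => exact ⟨a, t, rfl⟩
  have hqh00 : qh = (0, 0) := by simpa using hqhead
  subst hqh00
  set Q : List (ℕ × ℕ) := (0, 0) :: qt with hQdef
  have hclasteq : clast2 = clast := by
    rw [hqlast] at hqlast2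
    exact (Option.some_inj.mp hqlast2).symm
  have hWlast' : W.entry clast.1 clast.2 = μ.card := by
    rw [← hclasteq]
    exact hWlast
  have hq00 : (0, 0) ∈ Q := List.mem_cons_self
  have hQ := chain'_and hqchain hchain2V
  have hVne1 : ∀ c : ℕ × ℕ, c ∈ μ → c ≠ (0, 0) → 2 ≤ V.entry c.1 c.2 := by
    intro c hc hne
    have h1 := (V.mem_range c.1 c.2 hc).1
    rcases Nat.lt_or_ge (V.entry c.1 c.2) 2 with h | h
    · exfalso
      have he : V.entry c.1 c.2 = 1 := by omega
      exact hne (entry_inj V hc C.mem00μ (by rw [he]; exact hV00.symm))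
    · exact h
  have hgWoff : ∀ c : ℕ × ℕ, c ∈ μ → c ∉ Q →
      g (W.entry c.1 c.2) = U.entry (c.1 + 1) c.2 - 1 := by
    intro c hc hcq
    have hW := hoffV c hc hcq
    have hV2 : 2 ≤ V.entry c.1 c.2 := hVne1 c hc (fun h => hcq (h ▸ hq00))
    have hVle := (V.mem_range c.1 c.2 hc).2
    rw [hW]
    rw [hgval _ (by omega)]
    have hoc : ocell V (V.entry c.1 c.2 - 1 + 1) = c :=
      (ocell_unique V (by omega) (by omega) hc (by omega)).symm
    rw [hoc]
  have hgWedge : ∀ c d : ℕ × ℕ, SlideStep μ V c d →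
      W.entry c.1 c.2 = V.entry d.1 d.2 - 1 →
      g (W.entry c.1 c.2) = U.entry (d.1 + 1) d.2 - 1 := by
    intro c d hsl hwe
    have hd : d ∈ μ := hsl.2.1
    have hc : c ∈ μ := slide_mem_left V hsl
    have hV2 : 2 ≤ V.entry d.1 d.2 := by
      have h1 := slide_lt V hsl
      have h2' := (V.mem_range c.1 c.2 hc).1
      omega
    have hVle := (V.mem_range d.1 d.2 hd).2
    rw [hwe, hgval _ (by omega)]
    have hoc : ocell V (V.entry d.1 d.2 - 1 + 1) = d :=
      (ocell_unique V (by omega) (by omega) hd (by omega)).symm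
    rw [hoc]
  have hslide : ∀ c d : ℕ × ℕ, SlideStep μ V c d →
      SlideStep ν U (c.1 + 1, c.2) (d.1 + 1, d.2) := by
    intro c d hsl
    obtain ⟨hdir, hdm, hmin⟩ := hsl
    refine ⟨?_, C.inner_mem hdm, ?_⟩
    · rcases hdir with h | h
      · left; rw [h]
      · right; rw [h]
    · rintro c'' (rfl | rfl) hm''
      · have he : (c.1, c.2 + 1) ∈ μ := (C.hν1 c.1 (c.2 + 1)).mp hm''
        have hle := hmin (c.1, c.2 + 1) (Or.inl rfl) he
        exact (horder' d (c.1, c.2 + 1) hdm he).mp hle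
      · have he : (c.1 + 1, c.2) ∈ μ := (C.hν1 (c.1 + 1) c.2).mp hm''
        have hle := hmin (c.1 + 1, c.2) (Or.inr rfl) he
        exact (horder' d (c.1 + 1, c.2) hdm he).mp hle
  have hrow0ge3 : ∀ j, 1 ≤ j → (0, j) ∈ ν → 3 ≤ U.entry 0 j := by
    intro j hj hm
    have h2' := C.row0_ge_two U hj hm
    rcases Nat.lt_or_ge (U.entry 0 j) 3 with h | h
    · exfalso
      have he : U.entry 0 j = 2 := by omega
      have := entry_inj U hm C.mem10ν (by rw [he]; exact hU10.symm)
      simp [Prod.ext_iff] at this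
    · exact h
  -- the new entry function
  set f : ℕ → ℕ → ℕ := fun i j =>
    if (i, j) ∈ ν then
      (if i = 0 then (if j = 0 then 1 else U.entry 0 j - 1) else g (W.entry (i - 1) j))
    else 0 with hfdef
  have hf00 : f 0 0 = 1 := by
    show (if ((0 : ℕ), (0 : ℕ)) ∈ ν then
      (if (0 : ℕ) = 0 then (if (0 : ℕ) = 0 then 1 else U.entry 0 0 - 1)
       else g (W.entry (0 - 1) 0)) else 0) = 1
    rw [if_pos C.mem00ν, if_pos rfl, if_pos rfl]
  have hf0 : ∀ j, j ≠ 0 → (0, j) ∈ ν → f 0 j = U.entry 0 j - 1 := by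
    intro j hj hm
    show (if ((0 : ℕ), j) ∈ ν then
      (if (0 : ℕ) = 0 then (if j = 0 then 1 else U.entry 0 j - 1)
       else g (W.entry (0 - 1) j)) else 0) = U.entry 0 j - 1
    rw [if_pos hm, if_pos rfl, if_neg hj]
  have hfinner : ∀ i j, 1 ≤ i → (i, j) ∈ ν → f i j = g (W.entry (i - 1) j) := by
    intro i j hi hm
    show (if (i, j) ∈ ν then
      (if i = 0 then (if j = 0 then 1 else U.entry 0 j - 1)
       else g (W.entry (i - 1) j)) else 0) = g (W.entry (i - 1) j)
    rw [if_pos hm, if_neg (by omega : ¬ i = 0)]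
  have hfinner' : ∀ c : ℕ × ℕ, c ∈ μ → f (c.1 + 1) c.2 = g (W.entry c.1 c.2) := by
    intro c hc
    have := hfinner (c.1 + 1) c.2 (by omega) (C.inner_mem hc)
    simpa using this
  have hginner : ∀ c : ℕ × ℕ, c ∈ μ →
      g (W.entry c.1 c.2) = n ∨
      ∃ d : ℕ × ℕ, d ∈ μ ∧ ((d = c ∧ c ∉ Q) ∨ d = (c.1, c.2 + 1) ∨ d = (c.1 + 1, c.2)) ∧
        g (W.entry c.1 c.2) = U.entry (d.1 + 1) d.2 - 1 := by
    intro c hc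
    by_cases hcq : c ∈ Q
    · rcases chain'_mem_elim Q hQ c hcq with h | ⟨d, hd⟩
      · left
        have hcl : c = clast := by
          rw [hqlast] at h
          exact (Option.some_inj.mp h).symm
        rw [hcl, hWlast', hgm]
      · right
        exact ⟨d, hd.1.2.1, Or.inr hd.1.1, hgWedge c d hd.1 hd.2⟩
    · right
      exact ⟨c, hc, Or.inl ⟨rfl, hcq⟩, hgWoff c hc hcq⟩
  -- SYT axioms
  have hrs : ∀ i j1 j2, j1 < j2 → (i, j2) ∈ ν → f i j1 < f i j2 := by
    intro i j1 j2 hj hm2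
    have hm1 : (i, j1) ∈ ν := ν.up_left_mem le_rfl (by omega) hm2
    by_cases hi : i = 0
    · subst hi
      by_cases hj1 : j1 = 0
      · subst hj1
        rw [hf00, hf0 j2 (by omega) hm2]
        have := hrow0ge3 j2 (by omega) hm2
        omega
      · rw [hf0 j1 hj1 hm1, hf0 j2 (by omega) hm2]
        have h1 := U.row_strict 0 j1 j2 hj hm2
        have h2' := (U.mem_range 0 j1 hm1).1
        omega
    · have hi1 : 1 ≤ i := by omega
      rw [hfinner i j1 hi1 hm1, hfinner i j2 hi1 hm2]
      have hm2' : (i - 1, j2) ∈ μ := (C.mem_inner_iff j2 hi1).mp hm2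
      have hm1' : (i - 1, j1) ∈ μ := (C.mem_inner_iff j1 hi1).mp hm1
      have hWs := W.row_strict (i - 1) j1 j2 hj hm2'
      exact hg_mono _ _ (W.mem_range _ _ hm1').1 hWs (W.mem_range _ _ hm2').2
  have hcs : ∀ i1 i2 j, i1 < i2 → (i2, j) ∈ ν → f i1 j < f i2 j := by
    intro i1 i2 j h hm2
    have hi2 : 1 ≤ i2 := by omega
    have hm2' : (i2 - 1, j) ∈ μ := (C.mem_inner_iff j hi2).mp hm2
    rw [hfinner i2 j hi2 hm2]
    by_cases hi1 : i1 = 0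
    · subst hi1
      have hμ0j : (0, j) ∈ μ := μ.up_left_mem (by omega) le_rfl hm2'
      have hm0 : (0, j) ∈ ν := ν.up_left_mem (by omega) le_rfl hm2
      have key : f 0 j < g (W.entry 0 j) := by
        rcases hginner (0, j) hμ0j with hgn | ⟨d, hd, hdir, hde⟩
        · have hgn' : g (W.entry 0 j) = n := hgn
          rw [hgn']
          by_cases hj : j = 0
          · subst hj; rw [hf00]; omega
          · rw [hf0 j hj hm0]
            have h1 := C.entry_le_n U 0 j
            have h2' := (U.mem_range 0 j hm0).1
            omega
        · have hde' : g (W.entry 0 j) = U.entry (d.1 + 1) d.2 - 1 := hde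
          rw [hde']
          by_cases hj : j = 0
          · subst hj
            rw [hf00]
            have h3 : 3 ≤ U.entry (d.1 + 1) d.2 := by
              rcases hdir with ⟨rfl, hcQ⟩ | rfl | rfl
              · exact absurd hq00 hcQ
              · have hmem : (1, 1) ∈ ν := C.inner_mem hd
                have h1 := U.row_strict 1 0 1 (by omega) hmem
                show 3 ≤ U.entry 1 1
                omega
              · have hmem : (2, 0) ∈ ν := C.inner_mem hd
                have h1 := U.col_strict 1 2 0 (by omega) hmem
                show 3 ≤ U.entry 2 0
                omega
            omega
          · rw [hf0 j hj hm0]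
            have hUd : U.entry 0 j < U.entry (d.1 + 1) d.2 := by
              rcases hdir with ⟨rfl, -⟩ | rfl | rfl
              · exact U.col_strict 0 1 j (by omega) (C.inner_mem hd)
              · have hmem : (1, j + 1) ∈ ν := C.inner_mem hd
                have hmem0 : (0, j + 1) ∈ ν := ν.up_left_mem (by omega) le_rfl hmem
                have h1 := U.row_strict 0 j (j + 1) (by omega) hmem0
                have h2' := U.col_strict 0 1 (j + 1) (by omega) hmem
                show U.entry 0 j < U.entry 1 (j + 1)
                omega
              · have hmem : (2, j) ∈ ν := C.inner_mem hd
                exact U.col_strict 0 2 j (by omega) hmem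
            have := (U.mem_range 0 j hm0).1
            omega
      rcases Nat.eq_or_lt_of_le hi2 with h2' | h2'
      · rw [show i2 - 1 = 0 by omega]
        exact key
      · have hμ0j' := W.mem_range 0 j hμ0j
        have hWs := W.col_strict 0 (i2 - 1) j (by omega) hm2'
        have := hg_mono _ _ hμ0j'.1 hWs (W.mem_range _ _ hm2').2
        omega
    · have hi1' : 1 ≤ i1 := by omega
      have hm1 : (i1, j) ∈ ν := ν.up_left_mem (by omega) le_rfl hm2
      have hm1' : (i1 - 1, j) ∈ μ := (C.mem_inner_iff j hi1').mp hm1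
      rw [hfinner i1 j hi1' hm1]
      have hWs := W.col_strict (i1 - 1) (i2 - 1) j (by omega) hm2'
      exact hg_mono _ _ (W.mem_range _ _ hm1').1 hWs (W.mem_range _ _ hm2').2
  have hz : ∀ i j, (i, j) ∉ ν → f i j = 0 := by
    intro i j hm
    simp only [hfdef]
    rw [if_neg hm]
  have hmr : ∀ i j, (i, j) ∈ ν → 1 ≤ f i j ∧ f i j ≤ ν.card := by
    intro i j hm
    rw [C.hcard]
    by_cases hi : i = 0
    · subst hi
      by_cases hj : j = 0
      · subst hj; rw [hf00]; omega
      · rw [hf0 j hj hm]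
        have h1 := hrow0ge3 j (by omega) hm
        have h2' := C.entry_le_n U 0 j
        omega
    · rw [hfinner i j (by omega) hm]
      have hm' : (i - 1, j) ∈ μ := (C.mem_inner_iff j (by omega)).mp hm
      have hWr := W.mem_range _ _ hm'
      have := hg_ge2 _ hWr.1 hWr.2
      have := hg_le _ hWr.1 hWr.2
      omega
  have hbij : ∀ v, 1 ≤ v → v ≤ ν.card → ∃! c : ℕ × ℕ, c ∈ ν ∧ f c.1 c.2 = v := by
    intro v hv1 hv2
    rw [C.hcard] at hv2
    by_cases hv1' : v = 1
    · subst hv1'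
      refine ⟨(0, 0), ⟨C.mem00ν, hf00⟩, ?_⟩
      rintro ⟨di, dj⟩ ⟨hdm, hde⟩
      simp only at hde
      by_cases hdi : di = 0
      · subst hdi
        by_cases hdj : dj = 0
        · simp [hdj]
        · rw [hf0 dj hdj hdm] at hde
          have := hrow0ge3 dj (by omega) hdm
          omega
      · rw [hfinner di dj (by omega) hdm] at hde
        have hdm' : (di - 1, dj) ∈ μ := (C.mem_inner_iff dj (by omega)).mp hdm
        have hWr := W.mem_range _ _ hdm'
        have := hg_ge2 _ hWr.1 hWr.2
        omega
    · by_cases hvn : v = n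
      · refine ⟨(clast.1 + 1, clast.2), ⟨C.inner_mem hcorner.1, ?_⟩, ?_⟩
        · show f (clast.1 + 1) clast.2 = v
          rw [hfinner' clast hcorner.1, hWlast', hgm, hvn]
        · rintro ⟨di, dj⟩ ⟨hdm, hde⟩
          simp only at hde
          by_cases hdi : di = 0
          · subst hdi
            by_cases hdj : dj = 0
            · rw [hdj, hf00] at hde; omega
            · rw [hf0 dj hdj hdm] at hde
              have := C.entry_le_n U 0 dj
              omega
          · rw [hfinner di dj (by omega) hdm] at hde
            have hdm' : (di - 1, dj) ∈ μ := (C.mem_inner_iff dj (by omega)).mp hdm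
            have hWr := W.mem_range _ _ hdm'
            by_cases hk : W.entry (di - 1) dj = μ.card
            · have hcl : (di - 1, dj) = clast :=
                entry_inj W hdm' hcorner.1 (by rw [hWlast']; exact hk)
              have h1 := Prod.ext_iff.mp hcl
              simp only at h1
              have hdi' : di = clast.1 + 1 := by omega
              rw [hdi', h1.2]
            · rw [hgval _ hk] at hde
              have := hival_le (W.entry (di - 1) dj + 1) (by omega) (by omega)
              omega
      · obtain ⟨⟨ci, cj⟩, ⟨hcm, hce⟩, hcu⟩ := U.bij (v + 1) (by omega) (by rw [C.hcard]; omega)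
        simp only at hce
        by_cases hci : ci = 0
        · subst hci
          have hcj0 : cj ≠ 0 := by
            intro h
            rw [h, C.U00 U] at hce
            omega
          refine ⟨(0, cj), ⟨hcm, ?_⟩, ?_⟩
          · show f 0 cj = v
            rw [hf0 cj hcj0 hcm, hce]
            omega
          · rintro ⟨di, dj⟩ ⟨hdm, hde⟩
            simp only at hde
            by_cases hdi : di = 0
            · subst hdi
              by_cases hdj : dj = 0
              · rw [hdj, hf00] at hde; omega
              · rw [hf0 dj hdj hdm] at hde
                have h1 := (U.mem_range 0 dj hdm).1
                have := hcu (0, dj) ⟨hdm, by simp only; omega⟩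
                have h2' := Prod.ext_iff.mp this
                simp only at h2'
                have hdj' : dj = cj := h2'.2
                rw [hdj']
            · rw [hfinner di dj (by omega) hdm] at hde
              have hdm' : (di - 1, dj) ∈ μ := (C.mem_inner_iff dj (by omega)).mp hdm
              have hWr := W.mem_range _ _ hdm'
              by_cases hk : W.entry (di - 1) dj = μ.card
              · rw [hk, hgm] at hde; omega
              · rw [hgval _ hk] at hde
                obtain ⟨hspm, hspe⟩ := ocell_spec V
                  (k := W.entry (di - 1) dj + 1) (by omega) (by omega)
                have h3 := hival_ge3 (W.entry (di - 1) dj + 1) (by omega) (by omega)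
                have heq : U.entry ((ocell V (W.entry (di - 1) dj + 1)).1 + 1)
                    (ocell V (W.entry (di - 1) dj + 1)).2 = v + 1 := by omega
                have hcontra := hcu _ ⟨C.inner_mem hspm, heq⟩
                have h4 := Prod.ext_iff.mp hcontra
                simp only at h4
                omega
        · have hci1 : 1 ≤ ci := by omega
          have hcm' : (ci - 1, cj) ∈ μ := (C.mem_inner_iff cj hci1).mp hcm
          have hV2 : 2 ≤ V.entry (ci - 1) cj := by
            apply hVne1 _ hcm'
            intro h
            have h1 := Prod.ext_iff.mp h
            simp only at h1
            have : U.entry ci cj = 2 := by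
              have h2' : ci = 1 := by omega
              have h3' : cj = 0 := h1.2
              rw [h2', h3', hU10]
            omega
          have hVle := (V.mem_range _ _ hcm').2
          obtain ⟨⟨ei, ej⟩, ⟨hem, hee⟩, heu⟩ :=
            W.bij (V.entry (ci - 1) cj - 1) (by omega) (by omega)
          simp only at hee
          refine ⟨(ei + 1, ej), ⟨C.inner_mem hem, ?_⟩, ?_⟩
          · show f (ei + 1) ej = v
            have hfi := hfinner' (ei, ej) hem
            simp only at hfi
            rw [hfi, hee, hgval _ (by omega)]
            have hoc : ocell V (V.entry (ci - 1) cj - 1 + 1) = (ci - 1, cj) :=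
              (ocell_unique V (by omega) (by omega) hcm'
                (by show V.entry (ci - 1) cj = V.entry (ci - 1) cj - 1 + 1; omega)).symm
            rw [hoc]
            show U.entry (ci - 1 + 1) cj - 1 = v
            rw [Nat.sub_add_cancel hci1, hce]
            omega
          · rintro ⟨di, dj⟩ ⟨hdm, hde⟩
            simp only at hde
            by_cases hdi : di = 0
            · subst hdi
              by_cases hdj : dj = 0
              · rw [hdj, hf00] at hde; omega
              · rw [hf0 dj hdj hdm] at hde
                have h1 := (U.mem_range 0 dj hdm).1
                have hcontra := hcu (0, dj) ⟨hdm, by simp only; omega⟩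
                have h2' := Prod.ext_iff.mp hcontra
                simp only at h2'
                omega
            · rw [hfinner di dj (by omega) hdm] at hde
              have hdm' : (di - 1, dj) ∈ μ := (C.mem_inner_iff dj (by omega)).mp hdm
              have hWr := W.mem_range _ _ hdm'
              by_cases hk : W.entry (di - 1) dj = μ.card
              · rw [hk, hgm] at hde; omega
              · rw [hgval _ hk] at hde
                obtain ⟨hspm, hspe⟩ := ocell_spec V
                  (k := W.entry (di - 1) dj + 1) (by omega) (by omega)
                have h3 := hival_ge3 (W.entry (di - 1) dj + 1) (by omega) (by omega)
                have heq : U.entry ((ocell V (W.entry (di - 1) dj + 1)).1 + 1)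
                    (ocell V (W.entry (di - 1) dj + 1)).2 = v + 1 := by omega
                have hocc := hcu _ ⟨C.inner_mem hspm, heq⟩
                have h4 := Prod.ext_iff.mp hocc
                simp only at h4
                have hoc2 : ocell V (W.entry (di - 1) dj + 1) = (ci - 1, cj) := by
                  rw [Prod.ext_iff]
                  constructor
                  · omega
                  · exact h4.2
                have h5 : W.entry (di - 1) dj + 1 = V.entry (ci - 1) cj := by
                  have h5' := hspe
                  rw [hoc2] at h5'
                  exact h5'.symm
                have h6 : W.entry (di - 1) dj = V.entry (ci - 1) cj - 1 := by omega
                have h7 := heu (di - 1, dj) ⟨hdm', h6⟩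
                have h8 := Prod.ext_iff.mp h7
                simp only at h8
                have hdi' : di = ei + 1 := by omega
                have hdj' : dj = ej := h8.2
                rw [hdi', hdj']
  refine ⟨⟨f, hrs, hcs, hz, hmr, hbij⟩, ?_, ?_, ?_⟩
  · -- IsPromotion
    set p : List (ℕ × ℕ) := (0, 0) :: Q.map (fun c => (c.1 + 1, c.2)) with hp
    have hplast : p.getLast? = some (clast.1 + 1, clast.2) := by
      rw [hp, getLast?_cons_ne (by simp [hQdef]), List.getLast?_map, hqlast]
      rfl
    refine ⟨p, ⟨rfl, ?_, ⟨(clast.1 + 1, clast.2), hplast, ?_, ?_, ?_⟩⟩, ?_, ?_,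
      ⟨(clast.1 + 1, clast.2), hplast, ?_⟩⟩
    · -- chain of slide steps
      rw [hp, List.Chain', List.isChain_cons]
      constructor
      · intro b hb
        rw [hQdef, List.map_cons, List.head?_cons] at hb
        have hb' : ((0 : ℕ) + 1, (0 : ℕ)) = b := by simpa using hb
        subst hb'
        refine ⟨Or.inr rfl, C.mem10ν, ?_⟩
        rintro c'' (rfl | rfl) hm''
        · show U.entry 1 0 ≤ U.entry 0 1
          rw [hU10]
          exact C.row0_ge_two U (by omega) hm''
        · exact le_rfl
      · rw [List.isChain_map]
        exact hQ.imp (fun a b hab => hslide a b hab.1)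
    · exact C.inner_mem hcorner.1
    · intro h
      exact hcorner.2.1 ((C.hν1 clast.1 (clast.2 + 1)).mp h)
    · intro h
      exact hcorner.2.2 ((C.hν1 (clast.1 + 1) clast.2).mp h)
    · -- off-path
      rintro ⟨di, dj⟩ hdm hdp
      show f di dj = U.entry di dj - 1
      by_cases hdi : di = 0
      · subst hdi
        have hdj : dj ≠ 0 := by
          intro h
          subst h
          exact hdp (by rw [hp]; exact List.mem_cons_self)
        exact hf0 dj hdj hdm
      · have hdm' : (di - 1, dj) ∈ μ := (C.mem_inner_iff dj (by omega)).mp hdm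
        have hdq : (di - 1, dj) ∉ Q := by
          intro h
          apply hdp
          rw [hp]
          apply List.mem_cons_of_mem
          rw [List.mem_map]
          exact ⟨(di - 1, dj), h, by rw [Prod.ext_iff]; simp; omega⟩
        have hval := hgWoff (di - 1, dj) hdm' hdq
        simp only at hval
        rw [hfinner di dj (by omega) hdm, hval, Nat.sub_add_cancel (by omega : 1 ≤ di)]
    · -- chain 2
      rw [hp, List.Chain', List.isChain_cons]
      constructor
      · intro b hb
        rw [hQdef, List.map_cons, List.head?_cons] at hb
        have hb' : ((0 : ℕ) + 1, (0 : ℕ)) = b := by simpa using hb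
        subst hb'
        show f 0 0 = U.entry (0 + 1) 0 - 1
        rw [hf00, show (0 : ℕ) + 1 = 1 from rfl, hU10]
      · rw [List.isChain_map]
        apply hQ.imp
        intro a b hab
        have ha : a ∈ μ := slide_mem_left V hab.1
        show f (a.1 + 1) a.2 = U.entry (b.1 + 1) b.2 - 1
        rw [hfinner' a ha]
        exact hgWedge a b hab.1 hab.2
    · show f (clast.1 + 1) clast.2 = ν.card
      rw [hfinner' clast hcorner.1, hWlast', hgm, C.hcard]
  · -- Inv
    have hne2 : ∀ c : ℕ × ℕ, c ∈ μ → f (c.1 + 1) c.2 ≠ 2 := by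
      intro c hc
      rw [hfinner' c hc]
      have hWr := W.mem_range _ _ hc
      by_cases hk : W.entry c.1 c.2 = μ.card
      · rw [hk, hgm]
        omega
      · rw [hgval _ hk]
        intro hcontra
        obtain ⟨hspm, hspe⟩ := ocell_spec V (k := W.entry c.1 c.2 + 1) (by omega) (by omega)
        have h3 := hival_ge3 (W.entry c.1 c.2 + 1) (by omega) (by omega)
        have hocne : ocell V (W.entry c.1 c.2 + 1) ≠ (0, 0) := by
          intro h
          rw [h] at hspe
          simp only at hspe
          rw [hV00] at hspe
          omega
        rcases hgapU _ _ hspm C.mem00μ hocne with hgp | hgp <;>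
          · simp only at hgp
            rw [show (0 : ℕ) + 1 = 1 from rfl, hU10] at hgp
            omega
    refine ⟨?_, ?_, ?_⟩
    · intro c c' hc hc'
      show W.entry c.1 c.2 < W.entry c'.1 c'.2 ↔ f (c.1 + 1) c.2 < f (c'.1 + 1) c'.2
      rw [hfinner' c hc, hfinner' c' hc']
      have hr1 := W.mem_range _ _ hc
      have hr2 := W.mem_range _ _ hc'
      constructor
      · intro h
        exact hg_mono _ _ hr1.1 h hr2.2
      · intro h
        rcases lt_trichotomy (W.entry c.1 c.2) (W.entry c'.1 c'.2) with ht | ht | ht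
        · exact ht
        · exfalso; rw [ht] at h; exact lt_irrefl _ h
        · exfalso
          have := hg_mono _ _ hr2.1 ht hr1.2
          omega
    · intro c c' hc hc' hne
      show f (c.1 + 1) c.2 + 2 ≤ f (c'.1 + 1) c'.2 ∨
        f (c'.1 + 1) c'.2 + 2 ≤ f (c.1 + 1) c.2
      rw [hfinner' c hc, hfinner' c' hc']
      have hr1 := W.mem_range _ _ hc
      have hr2 := W.mem_range _ _ hc'
      have hWne : W.entry c.1 c.2 ≠ W.entry c'.1 c'.2 :=
        fun h => hne (entry_inj W hc hc' h)
      rcases lt_trichotomy (W.entry c.1 c.2) (W.entry c'.1 c'.2) with ht | ht | ht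
      · exact Or.inl (hg_gap _ _ hr1.1 ht hr2.2)
      · exact absurd ht hWne
      · exact Or.inr (hg_gap _ _ hr2.1 ht hr1.2)
    · rintro ⟨⟨c, hc, hce⟩, -⟩
      exact hne2 c hc hce
  · -- innerSet
    ext v
    rw [mem_innerSet, Finset.mem_image]
    constructor
    · rintro ⟨c, hc, hce⟩
      have hce' : f (c.1 + 1) c.2 = v := hce
      rw [hfinner' c hc] at hce'
      have hWr := W.mem_range _ _ hc
      by_cases hk : W.entry c.1 c.2 = μ.card
      · rw [hk, hgm] at hce'
        refine ⟨2, mem_innerSet.mpr ⟨(0, 0), C.mem00μ, hU10⟩, ?_⟩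
        rw [rot1, if_pos rfl]
        exact hce'
      · rw [hgval _ hk] at hce'
        obtain ⟨hspm, hspe⟩ := ocell_spec V (k := W.entry c.1 c.2 + 1) (by omega) (by omega)
        have h3 := hival_ge3 (W.entry c.1 c.2 + 1) (by omega) (by omega)
        refine ⟨U.entry ((ocell V (W.entry c.1 c.2 + 1)).1 + 1)
          (ocell V (W.entry c.1 c.2 + 1)).2, mem_innerSet.mpr ⟨_, hspm, rfl⟩, ?_⟩
        rw [rot1, if_neg (by omega)]
        exact hce'
    · rintro ⟨w, hw, hwv⟩
      obtain ⟨e, he, hee⟩ := mem_innerSet.mp hw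
      by_cases hw2 : w = 2
      · subst hw2
        rw [rot1, if_pos rfl] at hwv
        refine ⟨clast, hcorner.1, ?_⟩
        show f (clast.1 + 1) clast.2 = v
        rw [hfinner' clast hcorner.1, hWlast', hgm]
        exact hwv
      · rw [rot1, if_neg hw2] at hwv
        have hV2 : 2 ≤ V.entry e.1 e.2 := by
          apply hVne1 e he
          intro h0
          rw [h0] at hee
          simp only at hee
          rw [show (0 : ℕ) + 1 = 1 from rfl, hU10] at hee
          exact hw2 hee.symm
        have hVle := (V.mem_range _ _ he).2
        obtain ⟨⟨ei, ej⟩, ⟨hem, heeW⟩, -⟩ := W.bij (V.entry e.1 e.2 - 1) (by omega) (by omega)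
        simp only at heeW
        refine ⟨(ei, ej), hem, ?_⟩
        show f (ei + 1) ej = v
        have hfi := hfinner' (ei, ej) hem
        simp only at hfi
        rw [hfi, heeW, hgval _ (by omega)]
        have hoc : ocell V (V.entry e.1 e.2 - 1 + 1) = e :=
          (ocell_unique V (by omega) (by omega) he (by omega)).symm
        rw [hoc, hee]
        exact hwv

end StepB


section Rot

theorem rot_iter {n : ℕ} (hn : 2 ≤ n) : ∀ s v, 2 ≤ v → v ≤ n → s ≤ n - 1 →
    (rot1 n)^[s] v = if s + 2 ≤ v then v - s else v + (n - 1) - s := by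
  intro s
  induction s with
  | zero =>
    intro v h2 hvn _
    rw [Function.iterate_zero_apply, if_pos (by omega)]
    omega
  | succ s ih =>
    intro v h2 hvn hs
    rw [Function.iterate_succ_apply', ih v h2 hvn (by omega)]
    by_cases h1 : s + 2 ≤ v
    · rw [if_pos h1]
      by_cases hh : s + 1 + 2 ≤ v
      · rw [if_pos hh, rot1, if_neg (by omega)]
        omega
      · rw [if_neg hh, rot1, if_pos (by omega)]
        omega
    · rw [if_neg h1, if_neg (by omega), rot1, if_neg (by omega)]
      omega

theorem rot_id {n : ℕ} (hn : 2 ≤ n) {v : ℕ} (h2 : 2 ≤ v) (hvn : v ≤ n) :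
    (rot1 n)^[n - 1] v = v := by
  rw [rot_iter hn (n - 1) v h2 hvn le_rfl, if_neg (by omega)]
  omega

theorem rot_eq_two {n : ℕ} (hn : 2 ≤ n) {s v : ℕ} (h2 : 2 ≤ v) (hvn : v ≤ n)
    (hs : s ≤ n - 2) : (rot1 n)^[s] v = 2 ↔ v = s + 2 := by
  rw [rot_iter hn s v h2 hvn (by omega)]
  by_cases h1 : s + 2 ≤ v
  · rw [if_pos h1]; omega
  · rw [if_neg h1]; omega

end Rot

section Steps

variable {μ ν : YoungDiagram} {n : ℕ}

theorem steps (C : Ctx μ ν n) : ∀ s, s ≤ n - 1 → ∀ (U : SYT ν) (V X : SYT μ),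
    Inv μ ν n U V →
    IsPromIter μ ((innerSet μ U).filter (fun v => v ≤ s + 1)).card V X →
    ∃ U' : SYT ν, IsPromIter ν s U U' ∧ Inv μ ν n U' X ∧
      innerSet μ U' = (innerSet μ U).image ((rot1 n)^[s]) := by
  intro s
  induction s with
  | zero =>
    intro _ U V X hInv hit
    have hfil : (innerSet μ U).filter (fun v => v ≤ 0 + 1) = ∅ := by
      rw [Finset.filter_eq_empty_iff]
      intro v hv
      have := innerSet_sub C U hv
      rw [Finset.mem_Icc] at this
      omega
    rw [hfil, Finset.card_empty] at hit
    have hXV : X = V := hit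
    subst hXV
    exact ⟨U, rfl, hInv, by simp⟩
  | succ s ih =>
    intro hs U V X hInv hit
    have hn2 : 2 ≤ n := C.npos
    have hSIcc : ∀ v ∈ innerSet μ U, 2 ≤ v ∧ v ≤ n := fun v hv => by
      have := innerSet_sub C U hv
      rw [Finset.mem_Icc] at this
      exact this
    by_cases hmem : s + 2 ∈ innerSet μ U
    · have h1 : (innerSet μ U).filter (fun v => v ≤ s + 1 + 1) =
          insert (s + 2) ((innerSet μ U).filter (fun v => v ≤ s + 1)) := by
        ext v
        rw [Finset.mem_filter, Finset.mem_insert, Finset.mem_filter]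
        constructor
        · rintro ⟨hv, hle⟩
          rcases Nat.eq_or_lt_of_le hle with h | h
          · left; omega
          · right; exact ⟨hv, by omega⟩
        · rintro (h | ⟨hv, hle⟩)
          · subst h; exact ⟨hmem, by omega⟩
          · exact ⟨hv, by omega⟩
      rw [h1, Finset.card_insert_of_notMem
        (by rw [Finset.mem_filter]; rintro ⟨-, h⟩; omega)] at hit
      obtain ⟨V1, hV1, hV1X⟩ := promIter_split hit
      obtain ⟨U1, hU1, hInv1, hS1⟩ := ih (by omega) U V V1 hInv hV1
      obtain ⟨X', hX', hX'X⟩ := hV1X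
      have hXX : X = X' := hX'X
      subst hXX
      have h2mem : ∃ c : ℕ × ℕ, c ∈ μ ∧ U1.entry (c.1 + 1) c.2 = 2 := by
        apply mem_innerSet.mp
        rw [hS1, Finset.mem_image]
        refine ⟨s + 2, hmem, ?_⟩
        rw [rot_eq_two hn2 (by omega) (by have := (hSIcc _ hmem).2; omega) (by omega)]
      obtain ⟨U', hU'p, hInv', hS'⟩ := stepB C U1 V1 X hInv1 h2mem hX'
      refine ⟨U', promIter_add hU1 ⟨U', hU'p, rfl⟩, hInv', ?_⟩
      rw [hS', hS1, Finset.image_image]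
      congr 1
      rw [← Function.iterate_succ']
    · have h1 : (innerSet μ U).filter (fun v => v ≤ s + 1 + 1) =
          (innerSet μ U).filter (fun v => v ≤ s + 1) := by
        ext v
        rw [Finset.mem_filter, Finset.mem_filter]
        constructor
        · rintro ⟨hv, hle⟩
          refine ⟨hv, ?_⟩
          rcases Nat.eq_or_lt_of_le hle with h | h
          · exfalso; apply hmem; rw [show s + 2 = v by omega]; exact hv
          · omega
        · rintro ⟨hv, hle⟩; exact ⟨hv, by omega⟩
      rw [h1] at hit
      obtain ⟨U1, hU1, hInv1, hS1⟩ := ih (by omega) U V X hInv hit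
      have h2mem : ∀ c : ℕ × ℕ, c ∈ μ → U1.entry (c.1 + 1) c.2 ≠ 2 := by
        intro c hc hce
        have : (2 : ℕ) ∈ innerSet μ U1 := mem_innerSet.mpr ⟨c, hc, hce⟩
        rw [hS1, Finset.mem_image] at this
        obtain ⟨w, hw, hwe⟩ := this
        rw [rot_eq_two hn2 (hSIcc w hw).1 (hSIcc w hw).2 (by omega)] at hwe
        exact hmem (hwe ▸ hw)
      obtain ⟨U', hU'p, hInv', hS'⟩ := stepA C U1 X hInv1 h2mem
      refine ⟨U', promIter_add hU1 ⟨U', hU'p, rfl⟩, hInv', ?_⟩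
      rw [hS', hS1, Finset.image_image]
      congr 1
      have : rot1 n ∘ (rot1 n)^[s] = (rot1 n)^[s + 1] := (Function.iterate_succ' _ _).symm
      exact this

theorem round (C : Ctx μ ν n) (U : SYT ν) (V X : SYT μ) (hInv : Inv μ ν n U V)
    (hit : IsPromIter μ μ.card V X) :
    ∃ U' : SYT ν, IsPromIter ν (n - 1) U U' ∧ Inv μ ν n U' X ∧
      innerSet μ U' = innerSet μ U := by
  have hn2 : 2 ≤ n := C.npos
  have hfil : (innerSet μ U).filter (fun v => v ≤ (n - 1) + 1) = innerSet μ U := by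
    apply Finset.filter_true_of_mem
    intro v hv
    have := innerSet_sub C U hv
    rw [Finset.mem_Icc] at this
    omega
  obtain ⟨U', hU', hInv', hS'⟩ := steps C (n - 1) le_rfl U V X hInv
    (by rw [hfil, innerSet_card C U]; exact hit)
  refine ⟨U', hU', hInv', ?_⟩
  rw [hS']
  have heq : ∀ v ∈ innerSet μ U, (rot1 n)^[n - 1] v = id v := by
    intro v hv
    have := innerSet_sub C U hv
    rw [Finset.mem_Icc] at this
    exact rot_id hn2 this.1 this.2
  rw [Finset.image_congr heq, Finset.image_id]

theorem rounds (C : Ctx μ ν n) : ∀ (k : ℕ) (U : SYT ν) (V X : SYT μ),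
    Inv μ ν n U V → IsPromIter μ (k * μ.card) V X →
    ∃ U' : SYT ν, IsPromIter ν (k * (n - 1)) U U' ∧ Inv μ ν n U' X ∧
      innerSet μ U' = innerSet μ U := by
  intro k
  induction k with
  | zero =>
    intro U V X hInv hit
    rw [Nat.zero_mul] at hit
    have hXV : X = V := hit
    subst hXV
    exact ⟨U, by rw [Nat.zero_mul]; rfl, hInv, rfl⟩
  | succ k ih =>
    intro U V X hInv hit
    rw [show (k + 1) * μ.card = μ.card + k * μ.card by ring] at hit
    obtain ⟨Y, h1, h2⟩ := promIter_split hit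
    obtain ⟨U1, hU1, hInv1, hS1⟩ := round C U V Y hInv h1
    obtain ⟨U', hU', hInv', hS'⟩ := ih U1 Y X hInv1 h2
    refine ⟨U', ?_, hInv', by rw [hS', hS1]⟩
    rw [show (k + 1) * (n - 1) = (n - 1) + k * (n - 1) by ring]
    exact promIter_add hU1 hU'

theorem uniq (C : Ctx μ ν n) (U1 U2 : SYT ν) (V : SYT μ) (h1 : Inv μ ν n U1 V)
    (h2 : Inv μ ν n U2 V) (hS : innerSet μ U1 = innerSet μ U2) : U1 = U2 := by
  classical
  set S := innerSet μ U1 with hSdef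
  have hScard : S.card = μ.card := innerSet_card C U1
  -- inner cells agree
  have hinner : ∀ c : ℕ × ℕ, c ∈ μ → U1.entry (c.1 + 1) c.2 = U2.entry (c.1 + 1) c.2 := by
    have key : ∀ (Ua : SYT ν), Inv μ ν n Ua V → innerSet μ Ua = S →
        ∀ i : Fin μ.card, Ua.entry ((ocell V (i + 1)).1 + 1) (ocell V (i + 1)).2
          = S.orderEmbOfFin hScard i := by
      intro Ua hInva hSa
      have hfun := Finset.orderEmbOfFin_unique hScard
        (f := fun i : Fin μ.card =>
          Ua.entry ((ocell V ((i : ℕ) + 1)).1 + 1) (ocell V ((i : ℕ) + 1)).2)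
        (fun i => by
          rw [← hSa]
          exact mem_innerSet.mpr ⟨ocell V ((i : ℕ) + 1), (ocell_spec V (by omega)
            (by have := i.2; omega)).1, rfl⟩)
        (by
          intro i j hij
          have si := ocell_spec V (k := (i : ℕ) + 1) (by omega) (by have := i.2; omega)
          have sj := ocell_spec V (k := (j : ℕ) + 1) (by omega) (by have := j.2; omega)
          apply (hInva.1 _ _ si.1 sj.1).mp
          rw [si.2, sj.2]
          have : (i : ℕ) < (j : ℕ) := hij
          omega)
      intro i
      exact congrFun hfun i
    intro c hc
    have hcV := V.mem_range c.1 c.2 hc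
    have hcoc : c = ocell V (V.entry c.1 c.2) := ocell_unique V hcV.1 hcV.2 hc rfl
    have i : Fin μ.card := ⟨V.entry c.1 c.2 - 1, by omega⟩
    have e1 := key U1 h1 rfl ⟨V.entry c.1 c.2 - 1, by omega⟩
    have e2 := key U2 h2 hS.symm ⟨V.entry c.1 c.2 - 1, by omega⟩
    rw [show (⟨V.entry c.1 c.2 - 1, by omega⟩ : Fin μ.card).val + 1 = V.entry c.1 c.2
      by simp; omega, ← hcoc] at e1 e2
    rw [e1, e2]
  -- first-row cells agree
  have hrow0 : ∀ j, (0, j) ∈ ν → U1.entry 0 j = U2.entry 0 j := by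
    set T := (Finset.Icc 1 n) \ S with hTdef
    have hTcard : T.card = n - μ.card := by
      rw [hTdef, Finset.card_sdiff_of_subset (by
        intro v hv
        have := innerSet_sub C U1 hv
        rw [Finset.mem_Icc] at *
        omega), Nat.card_Icc, hScard]
      omega
    have key : ∀ (Ua : SYT ν), Inv μ ν n Ua V → innerSet μ Ua = S →
        ∀ i : Fin (n - μ.card), Ua.entry 0 i = T.orderEmbOfFin hTcard i := by
      intro Ua hInva hSa
      have hfun := Finset.orderEmbOfFin_unique hTcard
        (f := fun i : Fin (n - μ.card) => Ua.entry 0 (i : ℕ))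
        (fun i => by
          have hmemν : ((0 : ℕ), (i : ℕ)) ∈ ν := (C.hν0 _).mpr i.2
          rw [hTdef, Finset.mem_sdiff, Finset.mem_Icc]
          constructor
          · have := Ua.mem_range 0 i hmemν
            rw [C.hcard] at this
            exact this
          · intro hmem
            rw [← hSa] at hmem
            obtain ⟨c, hc, hce⟩ := mem_innerSet.mp hmem
            have := entry_inj Ua (C.inner_mem hc) hmemν hce
            simp [Prod.ext_iff] at this)
        (by
          intro i j hij
          have : (i : ℕ) < (j : ℕ) := hij
          exact Ua.row_strict 0 i j this ((C.hν0 _).mpr j.2))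
      intro i
      exact congrFun hfun i
    intro j hmj
    have hjr : j < n - μ.card := (C.hν0 j).mp hmj
    have e1 := key U1 h1 rfl ⟨j, hjr⟩
    have e2 := key U2 h2 hS.symm ⟨j, hjr⟩
    rw [show ((⟨j, hjr⟩ : Fin (n - μ.card)) : ℕ) = j from rfl] at e1 e2
    rw [e1, e2]
  apply syt_ext
  funext i j
  by_cases hm : (i, j) ∈ ν
  · rcases Nat.eq_zero_or_pos i with hi | hi
    · subst hi
      exact hrow0 j hm
    · have hm' : (i - 1, j) ∈ μ := (C.mem_inner_iff j (by omega)).mp hm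
      have := hinner (i - 1, j) hm'
      simp only at this
      rw [Nat.sub_add_cancel (by omega)] at this
      exact this
  · rw [U1.zeros i j hm, U2.zeros i j hm]

end Steps

end Stmt5


/-- let `U = T[n]` be a standard Young tableau of shape `μ[n]` (first row of
length `n - |μ|` on top of the shape `μ`), whose non-first-row portion `T` has all entries
differing pairwise by at least `2`, with `2` and `n` not both entries of `T`.  If `St` is
the standardization of `T` (a standard Young tableau of shape `μ` ordered the same way as
the entries of `T`), then the promotion order of `T[n]` divides
`(lcm(|T|, pr(St)) / |T|) · (n - 1)`. -/
theorem stmt_5 (μ ν : YoungDiagram) (n : ℕ) (hμ : 0 < μ.card)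
    (hν0 : ∀ j, (0, j) ∈ ν ↔ j < n - μ.card)
    (hν1 : ∀ i j, (i + 1, j) ∈ ν ↔ (i, j) ∈ μ)
    (hcard : ν.card = n)
    (U : SYT ν)
    (hgap : ∀ c c' : ℕ × ℕ, c ∈ μ → c' ∈ μ → c ≠ c' →
      2 ≤ max (U.entry (c.1 + 1) c.2) (U.entry (c'.1 + 1) c'.2)
            - min (U.entry (c.1 + 1) c.2) (U.entry (c'.1 + 1) c'.2))
    (h2n : ¬((∃ c : ℕ × ℕ, c ∈ μ ∧ U.entry (c.1 + 1) c.2 = 2) ∧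
             (∃ c : ℕ × ℕ, c ∈ μ ∧ U.entry (c.1 + 1) c.2 = n)))
    (St : SYT μ)
    (hSt : ∀ c c' : ℕ × ℕ, c ∈ μ → c' ∈ μ →
      (St.entry c.1 c.2 < St.entry c'.1 c'.2 ↔
        U.entry (c.1 + 1) c.2 < U.entry (c'.1 + 1) c'.2)) :
    promOrder ν U ∣ (Nat.lcm μ.card (promOrder μ St) / μ.card) * (n - 1) := by
  classical
  have C : Stmt5.Ctx μ ν n := ⟨hμ, hν0, hν1, hcard⟩
  have hgap' : ∀ c c' : ℕ × ℕ, c ∈ μ → c' ∈ μ → c ≠ c' →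
      U.entry (c.1 + 1) c.2 + 2 ≤ U.entry (c'.1 + 1) c'.2 ∨
      U.entry (c'.1 + 1) c'.2 + 2 ≤ U.entry (c.1 + 1) c.2 := by
    intro c c' hc hc' hne
    have h := hgap c c' hc hc' hne
    rcases le_total (U.entry (c.1 + 1) c.2) (U.entry (c'.1 + 1) c'.2) with hle | hle
    · left
      rw [max_eq_right hle, min_eq_left hle] at h
      omega
    · right
      rw [max_eq_left hle, min_eq_right hle] at h
      omega
  have hInv : Stmt5.Inv μ ν n U St := ⟨hSt, hgap', h2n⟩
  by_cases hp0 : promOrder μ St = 0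
  · rw [hp0, Nat.lcm_zero_right, Nat.zero_div, Nat.zero_mul]
    exact dvd_zero _
  · have hppos : 0 < promOrder μ St := Nat.pos_of_ne_zero hp0
    have hne : {k | 0 < k ∧ IsPromIter μ k St St}.Nonempty := by
      by_contra hempty
      rw [Set.not_nonempty_iff_eq_empty] at hempty
      apply hp0
      rw [promOrder, hempty, Nat.sInf_empty]
    have hpit : IsPromIter μ (promOrder μ St) St St := (Nat.sInf_mem hne).2
    have hmdvd : μ.card ∣ Nat.lcm μ.card (promOrder μ St) := Nat.dvd_lcm_left _ _
    have hpdvd : promOrder μ St ∣ Nat.lcm μ.card (promOrder μ St) := Nat.dvd_lcm_right _ _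
    have hkm : Nat.lcm μ.card (promOrder μ St) / μ.card * μ.card
        = Nat.lcm μ.card (promOrder μ St) := Nat.div_mul_cancel hmdvd
    have hLpos : 0 < Nat.lcm μ.card (promOrder μ St) :=
      Nat.pos_of_ne_zero (Nat.lcm_ne_zero (by omega) (by omega))
    obtain ⟨q', hq'⟩ := hpdvd
    have hLit : IsPromIter μ (Nat.lcm μ.card (promOrder μ St)) St St := by
      rw [hq', mul_comm]
      exact Stmt5.promIter_mul hpit q'
    have hLit' : IsPromIter μ (Nat.lcm μ.card (promOrder μ St) / μ.card * μ.card) St St := by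
      rw [hkm]
      exact hLit
    obtain ⟨U', hU', hInv', hS'⟩ := Stmt5.rounds C _ U St St hInv hLit'
    have hUU : U' = U := Stmt5.uniq C U' U St hInv' hInv hS'
    rw [hUU] at hU'
    have hkpos : 0 < Nat.lcm μ.card (promOrder μ St) / μ.card := by
      rcases Nat.eq_zero_or_pos (Nat.lcm μ.card (promOrder μ St) / μ.card) with h | h
      · rw [h] at hkm
        simp at hkm
        omega
      · exact h
    have hNpos : 0 < Nat.lcm μ.card (promOrder μ St) / μ.card * (n - 1) := by
      have := C.npos
      have : 1 ≤ n - 1 := by omega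
      exact Nat.mul_pos hkpos (by omega)
    exact Stmt5.promOrder_dvd hNpos hU'
end

section
/- If T[n] is a two-row standard Young tableau with first row of length n−|T| and second row T, then the k-th entry of the second row gets promoted into the first row during a promotion step if and only if that entry equals 2k and there is no i < k such that the i-th entry of the second row equals 2i. -/
namespace SYT

variable {μ : YoungDiagram} (T : SYT μ)

lemma entry_injOn {c c' : ℕ × ℕ} (hc : c ∈ μ) (hc' : c' ∈ μ)
    (h : T.entry c.1 c.2 = T.entry c'.1 c'.2) : c = c' := by
  obtain ⟨h1, h2⟩ := T.mem_range c.1 c.2 hc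
  obtain ⟨u, _, huniq⟩ := T.bij (T.entry c.1 c.2) h1 h2
  have e1 := huniq c ⟨hc, rfl⟩
  have e2 := huniq c' ⟨hc', h.symm⟩
  rw [e1, e2]

lemma row_mono (i a b : ℕ) (hab : a ≤ b) (hb : (i, b) ∈ μ) :
    T.entry i a ≤ T.entry i b := by
  rcases eq_or_lt_of_le hab with rfl | h
  · exact le_refl _
  · exact le_of_lt (T.row_strict i a b h hb)

lemma card_le (v : ℕ) (S : Finset (ℕ × ℕ))
    (hS : ∀ c ∈ S, c ∈ μ ∧ T.entry c.1 c.2 ≤ v) : S.card ≤ v := by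
  have h := Finset.card_le_card_of_injOn (t := Finset.Icc 1 v) (fun c => T.entry c.1 c.2)
    (fun c hc => by
      rcases hS c hc with ⟨hm, hv⟩
      exact Finset.mem_Icc.2 ⟨(T.mem_range c.1 c.2 hm).1, hv⟩)
    (fun c hc c' hc' h => T.entry_injOn (hS c hc).1 (hS c' hc').1 h)
  simpa using h

lemma le_card (v : ℕ) (hv : v ≤ μ.card) (S : Finset (ℕ × ℕ))
    (hS : ∀ c ∈ μ, T.entry c.1 c.2 ≤ v → c ∈ S) : v ≤ S.card := by
  have h := Finset.card_le_card_of_surjOn (s := S) (t := Finset.Icc 1 v)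
    (fun c => T.entry c.1 c.2) ?_
  · simpa using h
  · intro x hx
    simp only [Finset.coe_Icc, Set.mem_Icc] at hx
    obtain ⟨c, ⟨hcμ, hce⟩, -⟩ := T.bij x hx.1 (le_trans hx.2 hv)
    exact ⟨c, Finset.mem_coe.2 (hS c hcμ (hce ▸ hx.2)), hce⟩

end SYT

section Counting

variable {n m : ℕ} {μ : YoungDiagram} (T : SYT μ)
variable (hmn : m ≤ n - m)
  (h0 : ∀ j, (0, j) ∈ μ ↔ j < n - m)
  (h1 : ∀ j, (1, j) ∈ μ ↔ j < m)
  (h2 : ∀ i j, 2 ≤ i → (i, j) ∉ μ)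

include hmn h0 h1 in
lemma rect_mem (j : ℕ) (hj : j < m) :
    ∀ c ∈ (({0, 1} : Finset ℕ) ×ˢ Finset.range (j + 1)),
      c ∈ μ ∧ T.entry c.1 c.2 ≤ T.entry 1 j := by
  rintro ⟨a, b⟩ hc
  simp only [Finset.mem_product, Finset.mem_insert, Finset.mem_singleton,
    Finset.mem_range] at hc
  obtain ⟨ha, hb⟩ := hc
  have hb' : b ≤ j := by omega
  have h1b : (1, b) ∈ μ := (h1 b).2 (by omega)
  have h1j : (1, j) ∈ μ := (h1 j).2 hj
  rcases ha with rfl | rfl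
  · refine ⟨(h0 b).2 (by omega), ?_⟩
    exact le_trans (le_of_lt (T.col_strict 0 1 b (by omega) h1b))
      (T.row_mono 1 b j hb' h1j)
  · exact ⟨h1b, T.row_mono 1 b j hb' h1j⟩

include hmn h0 h1 in
lemma lower (j : ℕ) (hj : j < m) : 2 * j + 2 ≤ T.entry 1 j := by
  have h := T.card_le (T.entry 1 j) (({0, 1} : Finset ℕ) ×ˢ Finset.range (j + 1))
    (rect_mem T hmn h0 h1 j hj)
  simpa [Finset.card_product, mul_add] using h

include hmn h0 h1 in
lemma gt_of_eq (j : ℕ) (hj : j < m) (he : T.entry 1 j = 2 * j + 2)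
    (hc : (0, j + 1) ∈ μ) : T.entry 1 j < T.entry 0 (j + 1) := by
  have h1j : (1, j) ∈ μ := (h1 j).2 hj
  have hne : T.entry 0 (j + 1) ≠ T.entry 1 j := by
    intro h
    have := T.entry_injOn (c := (0, j + 1)) (c' := (1, j)) hc h1j h
    simp at this
  rcases lt_or_ge (T.entry 1 j) (T.entry 0 (j + 1)) with h | h
  · exact h
  have hlt : T.entry 0 (j + 1) < T.entry 1 j := lt_of_le_of_ne h hne
  exfalso
  have hnotmem : ((0 : ℕ), j + 1) ∉ (({0, 1} : Finset ℕ) ×ˢ Finset.range (j + 1)) := by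
    simp
  have hcard := T.card_le (T.entry 1 j)
    (insert (0, j + 1) (({0, 1} : Finset ℕ) ×ˢ Finset.range (j + 1))) ?_
  · rw [Finset.card_insert_of_notMem hnotmem] at hcard
    simp [Finset.card_product, mul_add] at hcard
    omega
  · intro c hcmem
    rcases Finset.mem_insert.1 hcmem with rfl | hcmem
    · exact ⟨hc, le_of_lt hlt⟩
    · exact rect_mem T hmn h0 h1 j hj c hcmem

include h1 h2 in
lemma upper (j : ℕ) (hj : j < m)
    (hcond : (0, j + 1) ∈ μ → T.entry 1 j < T.entry 0 (j + 1)) :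
    T.entry 1 j ≤ 2 * j + 2 := by
  have h1j : (1, j) ∈ μ := (h1 j).2 hj
  have h := T.le_card (T.entry 1 j) (T.mem_range 1 j h1j).2
    (({0, 1} : Finset ℕ) ×ˢ Finset.range (j + 1)) ?_
  · calc T.entry 1 j ≤ _ := h
      _ = 2 * j + 2 := by simp [Finset.card_product, mul_add]
  · rintro ⟨a, b⟩ hc hce
    simp only [Finset.mem_product, Finset.mem_insert, Finset.mem_singleton,
      Finset.mem_range]
    match a with
    | 0 =>
      refine ⟨Or.inl rfl, ?_⟩
      by_contra hb
      push_neg at hb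
      have h0j1 : (0, j + 1) ∈ μ := μ.up_left_mem (le_refl 0) (by omega) hc
      have := lt_of_lt_of_le (hcond h0j1) (T.row_mono 0 (j + 1) b (by omega) hc)
      simp only at hce
      omega
    | 1 =>
      refine ⟨Or.inr rfl, ?_⟩
      by_contra hb
      push_neg at hb
      have := T.row_strict 1 j b (by omega) hc
      simp only at hce
      omega
    | (a + 2) => exact absurd hc (h2 (a + 2) b (by omega))

include hmn h0 h1 h2 in
lemma eq2j (j : ℕ) (hj : j < m)
    (hcond : (0, j + 1) ∈ μ → T.entry 1 j < T.entry 0 (j + 1)) :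
    T.entry 1 j = 2 * j + 2 :=
  le_antisymm (upper T h1 h2 j hj hcond) (lower T hmn h0 h1 j hj)

end Counting

section Path

variable {μ : YoungDiagram} {T : SYT μ} {p : List (ℕ × ℕ)}

lemma path_pos (hp : IsSlidePath μ T p) : 0 < p.length := by
  rcases p with _ | ⟨a, p⟩
  · simp [IsSlidePath] at hp
  · simp

lemma path_get_zero (hp : IsSlidePath μ T p) (h : 0 < p.length) :
    p[0]'h = (0, 0) := by
  have := hp.1
  rw [List.head?_eq_getElem?, List.getElem?_eq_getElem h] at this
  exact Option.some_injective _ this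

lemma path_step (hp : IsSlidePath μ T p) (i : ℕ) (h : i + 1 < p.length) :
    SlideStep μ T (p[i]'(by omega)) (p[i + 1]'h) := by
  have := List.isChain_iff_getElem.1 hp.2.1 i (by omega)
  simpa [List.get_eq_getElem] using this

/-- While in row 0, the column equals the index. -/
lemma path_row0 (hp : IsSlidePath μ T p) :
    ∀ i, ∀ (hi : i < p.length), (p[i]'hi).1 = 0 → p[i]'hi = (0, i) := by
  intro i
  induction i with
  | zero => intro hi _; exact path_get_zero hp hi
  | succ i ih =>
    intro hi hrow
    obtain ⟨hor, hmem, hmin⟩ := path_step hp i hi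
    rcases hor with h | h
    · have hr : (p[i]'(by omega)).1 = 0 := by
        rw [h] at hrow; exact hrow
      have hpi := ih (by omega) hr
      rw [h, hpi]
    · exfalso
      rw [h] at hrow
      simp at hrow

/-- If a path cell is not an inner corner, it's not the last cell. -/
lemma path_not_last (hp : IsSlidePath μ T p) (i : ℕ) (hi : i < p.length)
    (hc : ¬ IsInnerCorner μ (p[i]'hi)) : i + 1 < p.length := by
  by_contra h
  push_neg at h
  have hie : i = p.length - 1 := by omega
  obtain ⟨c, hlast, hcorner⟩ := hp.2.2
  rw [List.getLast?_eq_getElem?, List.getElem?_eq_getElem (by omega)] at hlast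
  have : p[i]'hi = c := by
    have := Option.some_injective _ hlast
    subst hie
    exact this.symm ▸ this
  exact hc (this ▸ hcorner)

end Path
/-- let `T` be a standard Young tableau of the two-row shape `(n - m, m)`.
During a promotion step (i.e. along any jeu-de-taquin slide path of the empty box), the
`k`-th entry of the second row gets promoted into the first row — that is, the slide path
contains the vertical step from `(0, k-1)` to `(1, k-1)` — if and only if that entry equals
`2k` and there is no `i < k` whose second-row entry equals `2i`. -/
theorem stmt_6 (n m : ℕ) (hm : 0 < m) (hmn : m ≤ n - m) (μ : YoungDiagram)
    (h0 : ∀ j, (0, j) ∈ μ ↔ j < n - m)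
    (h1 : ∀ j, (1, j) ∈ μ ↔ j < m)
    (h2 : ∀ i j, 2 ≤ i → (i, j) ∉ μ)
    (T : SYT μ) (p : List (ℕ × ℕ)) (hp : IsSlidePath μ T p)
    (k : ℕ) (hk1 : 1 ≤ k) (hk2 : k ≤ m) :
    ((0, k - 1), (1, k - 1)) ∈ p.zip p.tail ↔
      (T.entry 1 (k - 1) = 2 * k ∧ ∀ i, 1 ≤ i → i < k → T.entry 1 (i - 1) ≠ 2 * i) := by
  obtain ⟨j, rfl⟩ : ∃ j, k = j + 1 := ⟨k - 1, by omega⟩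
  simp only [Nat.add_sub_cancel]
  have hjm : j < m := by omega
  have h1j : (1, j) ∈ μ := (h1 j).2 hjm
  constructor
  · -- forward direction
    intro hmem
    rw [List.mem_iff_getElem] at hmem
    obtain ⟨i, hi, hzip⟩ := hmem
    have hlen0 : i + 1 < p.length := by
      rw [List.length_zip, List.length_tail] at hi
      omega
    rw [List.getElem_zip, List.getElem_tail] at hzip
    have hpi : p[i]'(by omega) = (0, j) := congrArg Prod.fst hzip
    have hpi1 : p[i + 1]'hlen0 = (1, j) := congrArg Prod.snd hzip
    -- the index equals the column
    have hij : i = j := by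
      have := path_row0 hp i (by omega) (by rw [hpi])
      rw [hpi] at this
      simp only [Prod.mk.injEq] at this
      omega
    subst hij
    have hlen : i + 1 < p.length := hlen0
    have hstep := path_step hp i hlen
    rw [hpi, hpi1] at hstep
    obtain ⟨-, -, hmin⟩ := hstep
    constructor
    · -- the entry equals 2(j+1)
      have := eq2j T hmn h0 h1 h2 i hjm ?_
      · omega
      · intro h0i1
        have hle := hmin (0, i + 1) (Or.inl rfl) h0i1
        rcases eq_or_lt_of_le hle with h | h
        · exfalso
          have := T.entry_injOn (c := (1, i)) (c' := (0, i + 1)) h1j h0i1 h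
          simp at this
        · exact h
    · -- no earlier second-row entry equals 2i
      intro i' hi'1 hi'2
      obtain ⟨j', rfl⟩ : ∃ j', i' = j' + 1 := ⟨i' - 1, by omega⟩
      simp only [Nat.add_sub_cancel]
      have hji : j' < i := by omega
      -- all earlier cells of the path lie in row 0
      have back : ∀ d, ∀ _ : d ≤ i, (p[i - d]'(by omega)).1 = 0 := by
        intro d
        induction d with
        | zero =>
          intro _
          simpa using congrArg Prod.fst hpi
        | succ d ih =>
          intro hd
          have hrowd := ih (by omega)
          have hpd := path_row0 hp (i - d) (by omega) hrowd
          have heq : i - (d + 1) + 1 = i - d := by omega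
          obtain ⟨hor, -, -⟩ := path_step hp (i - (d + 1)) (by omega)
          simp only [heq] at hor
          rw [hpd] at hor
          rcases hor with h | h
          · exact congrArg Prod.fst h.symm
          · exfalso
            have := congrArg Prod.fst h
            simp at this
      have hpj' : p[j']'(by omega) = (0, j') := by
        have h1 := back (i - j') (by omega)
        have heq : i - (i - j') = j' := by omega
        simp only [heq] at h1
        exact path_row0 hp j' (by omega) h1
      have hpj'1 : p[j' + 1]'(by omega) = (0, j' + 1) := by
        have h1 := back (i - (j' + 1)) (by omega)
        have heq : i - (i - (j' + 1)) = j' + 1 := by omega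
        simp only [heq] at h1
        exact path_row0 hp (j' + 1) (by omega) h1
      have hstep' := path_step hp j' (by omega)
      rw [hpj', hpj'1] at hstep'
      obtain ⟨-, -, hmin'⟩ := hstep'
      have hle2' := hmin' (1, j') (Or.inr rfl) ((h1 j').2 (by omega))
      have hle2 : T.entry 0 (j' + 1) ≤ T.entry 1 j' := hle2'
      intro hcon
      have hgt := gt_of_eq T hmn h0 h1 j' (by omega) (by omega)
        ((h0 (j' + 1)).2 (by omega))
      omega
  · -- backward direction
    rintro ⟨he, hno⟩
    have key : ∀ i', i' ≤ j → ∃ hi : i' < p.length, p[i']'hi = (0, i') := by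
      intro i'
      induction i' with
      | zero => exact fun _ => ⟨path_pos hp, path_get_zero hp _⟩
      | succ i' ih =>
        intro hle
        obtain ⟨hi, hpe⟩ := ih (by omega)
        have hlen : i' + 1 < p.length := by
          refine path_not_last hp i' hi ?_
          rw [hpe]
          rintro ⟨-, -, hcor⟩
          exact hcor ((h1 i').2 (by omega))
        have hstep := path_step hp i' hlen
        rw [hpe] at hstep
        obtain ⟨hor, hmem2, hmin⟩ := hstep
        rcases hor with h | h
        · exact ⟨hlen, h⟩
        · exfalso
          have h0m : (0, i' + 1) ∈ μ := (h0 _).2 (by omega)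
          have hle2 := hmin (0, i' + 1) (Or.inl rfl) h0m
          rw [h] at hle2
          have hne : T.entry 1 i' ≠ T.entry 0 (i' + 1) := by
            intro hh
            have := T.entry_injOn (c := (1, i')) (c' := (0, i' + 1))
              ((h1 i').2 (by omega)) h0m hh
            simp at this
          have heq := eq2j T hmn h0 h1 h2 i' (by omega)
            (fun _ => lt_of_le_of_ne hle2 hne)
          have := hno (i' + 1) (by omega) (by omega)
          simp only [Nat.add_sub_cancel] at this
          omega
    obtain ⟨hj, hpj⟩ := key j le_rfl
    have hlen : j + 1 < p.length := by
      refine path_not_last hp j hj ?_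
      rw [hpj]
      rintro ⟨-, -, hcor⟩
      exact hcor h1j
    have hstep := path_step hp j hlen
    rw [hpj] at hstep
    obtain ⟨hor, hmem2, hmin⟩ := hstep
    rcases hor with h | h
    · exfalso
      rw [h] at hmem2
      have hle2' := hmin (1, j) (Or.inr rfl) h1j
      rw [h] at hle2'
      have hle2 : T.entry 0 (j + 1) ≤ T.entry 1 j := hle2'
      have hgt := gt_of_eq T hmn h0 h1 j hjm (by omega) hmem2
      omega
    · rw [List.mem_iff_getElem]
      refine ⟨j, ?_, ?_⟩
      · rw [List.length_zip, List.length_tail]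
        omega
      · rw [List.getElem_zip, List.getElem_tail, h, hpj]
end
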